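/- arXiv:2501.01296 — 9 statements merged into one kernel-verified Lean document; each statement's English description precedes it below -/
import Mathlib

section
/- Let T be a left-invertible operator on a Hilbert space H with Cauchy dual T' = T(T*T)^{-1}, and suppose T' is a contraction and the spectrum of T is contained in the closed unit disc. If λ is an approximate eigenvalue of T' witnessed by unit vectors h_n with T'h_n − λh_n → 0, then |λ| = 1. -/
open ContinuousLinearMap

/-- If `T` is left-invertible with Cauchy dual `T' = T (T*T)⁻¹` a contraction,
`σ(T)` is contained in the closed unit disc, and `λ` is an approximate eigenvalue
of `T'`, then `|λ| = 1`. -/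
theorem stmt3 {H : Type*} [NormedAddCommGroup H] [InnerProductSpace ℂ H] [CompleteSpace H]
    (T : H →L[ℂ] H) (hunit : IsUnit ((adjoint T) ∘L T))
    (T' : H →L[ℂ] H) (hT' : T' = T ∘L Ring.inverse ((adjoint T) ∘L T))
    (hcontr : ‖T'‖ ≤ 1)
    (hspec : ∀ z ∈ spectrum ℂ T, ‖z‖ ≤ 1)
    (lam : ℂ) (h : ℕ → H) (hnorm : ∀ n, ‖h n‖ = 1)
    (hconv : Filter.Tendsto (fun n => T' (h n) - lam • h n) Filter.atTop (nhds 0)) :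
    ‖lam‖ = 1 := by
  -- T* ∘ T' = 1
  have hTT' : (adjoint T) ∘L T' = 1 := by
    rw [hT', ← ContinuousLinearMap.comp_assoc]
    exact Ring.mul_inverse_cancel _ hunit
  have happ : ∀ x, adjoint T (T' x) = x := by
    intro x
    have := congrArg (fun (S : H →L[ℂ] H) => S x) hTT'
    simpa using this
  -- norms tend to 0
  have hnorm0 : Filter.Tendsto (fun n => ‖T' (h n) - lam • h n‖) Filter.atTop (nhds 0) := by
    simpa using hconv.norm
  -- ‖lam‖ ≤ 1
  have hle : ‖lam‖ ≤ 1 := by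
    have hbound : ∀ n, ‖lam‖ ≤ 1 + ‖T' (h n) - lam • h n‖ := by
      intro n
      have h1 : ‖lam • h n‖ = ‖lam‖ := by rw [norm_smul, hnorm n, mul_one]
      have h2 : ‖lam • h n‖ ≤ ‖T' (h n)‖ + ‖T' (h n) - lam • h n‖ := by
        have := norm_sub_norm_le (lam • h n) (T' (h n))
        rw [norm_sub_rev] at this
        linarith
      have h3 : ‖T' (h n)‖ ≤ 1 := by
        calc ‖T' (h n)‖ ≤ ‖T'‖ * ‖h n‖ := T'.le_opNorm _
        _ ≤ 1 := by rw [hnorm n, mul_one]; exact hcontr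
      calc ‖lam‖ = ‖lam • h n‖ := h1.symm
      _ ≤ ‖T' (h n)‖ + ‖T' (h n) - lam • h n‖ := h2
      _ ≤ 1 + ‖T' (h n) - lam • h n‖ := by linarith
    have : Filter.Tendsto (fun n => 1 + ‖T' (h n) - lam • h n‖) Filter.atTop (nhds 1) := by
      simpa using (tendsto_const_nhds.add hnorm0)
    exact ge_of_tendsto this (Filter.Eventually.of_forall hbound)
  -- apply adjoint T : h n - lam • T* h n → 0
  have hconv2 : Filter.Tendsto (fun n => h n - lam • adjoint T (h n)) Filter.atTop (nhds 0) := by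
    have := ((adjoint T).continuous.tendsto 0).comp hconv
    simpa [Function.comp_def, map_sub, happ, map_smul] using this
  -- lam ≠ 0
  have hne : lam ≠ 0 := by
    intro h0
    have : Filter.Tendsto (fun n => h n) Filter.atTop (nhds 0) := by
      simpa [h0] using hconv2
    have h1 : Filter.Tendsto (fun n => ‖h n‖) Filter.atTop (nhds 0) := by simpa using this.norm
    have h2 : Filter.Tendsto (fun (_ : ℕ) => (1:ℝ)) Filter.atTop (nhds 0) := by
      simpa [hnorm] using h1
    exact one_ne_zero (tendsto_nhds_unique tendsto_const_nhds h2)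
  -- T* h n - lam⁻¹ • h n → 0
  have hconv3 : Filter.Tendsto (fun n => adjoint T (h n) - lam⁻¹ • h n) Filter.atTop (nhds 0) := by
    have := hconv2.const_smul (-lam⁻¹)
    have heq : ∀ n, (-lam⁻¹) • (h n - lam • adjoint T (h n))
        = adjoint T (h n) - lam⁻¹ • h n := by
      intro n
      rw [smul_sub, smul_smul]
      field_simp
      module
    simpa [heq] using this
  -- lam⁻¹ ∈ σ(T*)
  have hmem : lam⁻¹ ∈ spectrum ℂ (adjoint T) := by
    by_contra hc
    rw [spectrum.notMem_iff] at hc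
    set u := hc.unit with hu
    have hinv : (↑u⁻¹ : H →L[ℂ] H) * (↑u : H →L[ℂ] H) = 1 := u.inv_mul
    have hval : ∀ n, (↑u : H →L[ℂ] H) (h n) = lam⁻¹ • h n - adjoint T (h n) := by
      intro n
      have : (↑u : H →L[ℂ] H) = algebraMap ℂ (H →L[ℂ] H) lam⁻¹ - adjoint T := hc.unit_spec
      rw [this]
      simp [Algebra.algebraMap_eq_smul_one]
    have h0 : Filter.Tendsto (fun n => (↑u : H →L[ℂ] H) (h n)) Filter.atTop (nhds 0) := by
      have : (fun n => (↑u : H →L[ℂ] H) (h n))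
          = fun n => -(adjoint T (h n) - lam⁻¹ • h n) := by
        funext n; rw [hval n]; abel
      rw [this]
      simpa using hconv3.neg
    have h1 : Filter.Tendsto (fun n => h n) Filter.atTop (nhds 0) := by
      have := (((↑u⁻¹ : H →L[ℂ] H)).continuous.tendsto 0).comp h0
      have heq : ∀ n, (↑u⁻¹ : H →L[ℂ] H) ((↑u : H →L[ℂ] H) (h n)) = h n := by
        intro n
        have h4 := congrArg (fun (S : H →L[ℂ] H) => S (h n)) hinv
        simpa only [ContinuousLinearMap.mul_apply, ContinuousLinearMap.one_apply] using h4
      simpa [Function.comp_def, heq] using this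
    have h2 : Filter.Tendsto (fun n => ‖h n‖) Filter.atTop (nhds 0) := by simpa using h1.norm
    have h3 : Filter.Tendsto (fun (_ : ℕ) => (1:ℝ)) Filter.atTop (nhds 0) := by
      simpa [hnorm] using h2
    exact one_ne_zero (tendsto_nhds_unique tendsto_const_nhds h3)
  -- σ(T*) = star σ(T), so conj(lam⁻¹) ∈ σ(T)
  have hmem2 : (starRingEnd ℂ) lam⁻¹ ∈ spectrum ℂ T := by
    have : adjoint T = star T := (ContinuousLinearMap.star_eq_adjoint T).symm
    rw [this, spectrum.map_star] at hmem
    simpa [Set.mem_star] using hmem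
  have hge : ‖lam⁻¹‖ ≤ 1 := by
    have := hspec _ hmem2
    simpa using this
  have hge' : 1 ≤ ‖lam‖ := by
    rw [norm_inv] at hge
    rw [inv_le_one_iff₀] at hge
    rcases hge with h | h
    · exact absurd (le_antisymm h (norm_nonneg _)) (by simpa using hne)
    · exact h
  linarith
end

section
/- Let T be an analytic norm-increasing operator on a Hilbert space H whose spectrum is contained in the closed unit disc, and let M be a nonzero closed invariant subspace of the Cauchy dual T'. Then for any λ in the approximate point spectrum of T' restricted to M, there exists a weakly null sequence of unit vectors (u_n) in M such that both (T − λ)u_n → 0 and (T' − λ)u_n → 0 in norm. -/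
/-!
Applying `T*` to `T' vₙ - λ vₙ → 0` (note `T* T' = 1`) makes `λ⁻¹` an approximate eigenvalue of
`T*`, so `conj λ⁻¹ ∈ σ(T)` and `|λ| ≥ 1`; as `T'` is a contraction, `|λ| = 1`. With
`B = (T*T)⁻¹` one has `‖Bx‖² ≤ ‖TBx‖² = re ⟪x, Bx⟫ = ‖T'x‖²`, hence
`‖vₙ - Bvₙ‖² ≤ 1 - ‖T'vₙ‖² → 0` and `T vₙ - λ vₙ = T (vₙ - Bvₙ) + (T' vₙ - λ vₙ) → 0`.
Then `T^k vₙ ≈ λ^k vₙ` gives `⟪b, vₙ⟫ → 0` for `b ∈ ker T*^k`. These kernels increase and their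
union is dense, because `(ker T*^k)ᗮ = ran T^k` (closed, `T^k` being bounded below) and the
ranges meet in `0`; so `(vₙ)` itself is weakly null.
-/

open ContinuousLinearMap Filter Topology
open scoped NNReal InnerProductSpace

section Operators

variable {𝕜 E : Type*} [NontriviallyNormedField 𝕜] [NormedAddCommGroup E] [NormedSpace 𝕜 E]
  {A : E →L[𝕜] E} {μ : 𝕜} {v : ℕ → E}

theorem not_tendsto_zero_of_norm_eq_one (hv : ∀ n, ‖v n‖ = 1) : ¬ Tendsto v atTop (𝓝 0) := by
  intro h
  have := (tendsto_zero_iff_norm_tendsto_zero.mp h).congr hv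
  exact one_ne_zero (tendsto_nhds_unique tendsto_const_nhds this)

theorem tendsto_pow_apply_sub_smul (hv : Tendsto (fun n => A (v n) - μ • v n) atTop (𝓝 0))
    (k : ℕ) : Tendsto (fun n => (A ^ k) (v n) - μ ^ k • v n) atTop (𝓝 0) := by
  induction k with
  | zero => simp
  | succ k ih =>
    have h := ((A.continuous.tendsto 0).comp ih).add (hv.const_smul (μ ^ k))
    simp only [Function.comp_def, map_zero, smul_zero, add_zero] at h
    refine h.congr fun n => ?_
    rw [pow_succ' A, pow_succ μ, mul_apply_eq_comp]
    simp only [map_sub, map_smul, smul_sub, smul_smul]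
    abel

theorem tendsto_norm_apply_of_tendsto_sub_smul (hv1 : ∀ n, ‖v n‖ = 1)
    (hv : Tendsto (fun n => A (v n) - μ • v n) atTop (𝓝 0)) :
    Tendsto (fun n => ‖A (v n)‖) atTop (𝓝 ‖μ‖) := by
  have h : Tendsto (fun n => ‖A (v n)‖ - ‖μ • v n‖) atTop (𝓝 0) :=
    squeeze_zero_norm (fun n => abs_norm_sub_norm_le _ _) (tendsto_norm_zero.comp hv)
  simpa [norm_smul, hv1] using h.add_const ‖μ‖

theorem mem_spectrum_of_tendsto_sub_smul (hv1 : ∀ n, ‖v n‖ = 1)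
    (hv : Tendsto (fun n => A (v n) - μ • v n) atTop (𝓝 0)) : μ ∈ spectrum 𝕜 A := by
  rintro ⟨U, hU⟩
  refine not_tendsto_zero_of_norm_eq_one hv1 ?_
  have h := ((U⁻¹ : (E →L[𝕜] E)ˣ).val.continuous.tendsto 0).comp (neg_zero (G := E) ▸ hv.neg)
  simp only [Function.comp_def, map_zero] at h
  refine h.congr fun n => ?_
  rw [show -(A (v n) - μ • v n) = U.val (v n) by simp [hU, Algebra.algebraMap_eq_smul_one],
    ← mul_apply_eq_comp, Units.inv_mul, one_apply_eq_self]

theorem tendsto_apply_sub_inv_smul (hv1 : ∀ n, ‖v n‖ = 1)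
    (hv : Tendsto (fun n => v n - μ • A (v n)) atTop (𝓝 0)) :
    μ ≠ 0 ∧ Tendsto (fun n => A (v n) - μ⁻¹ • v n) atTop (𝓝 0) := by
  have hμ : μ ≠ 0 := by
    rintro rfl
    exact not_tendsto_zero_of_norm_eq_one hv1 (by simpa using hv)
  refine ⟨hμ, ?_⟩
  have h := hv.const_smul (-μ⁻¹)
  rw [smul_zero] at h
  refine h.congr fun n => ?_
  rw [smul_sub, smul_smul, neg_mul, inv_mul_cancel₀ hμ, neg_smul, neg_smul, one_smul]
  abel

theorem norm_le_norm_pow_apply {T : E →L[𝕜] E} (hT : ∀ x, ‖x‖ ≤ ‖T x‖) (k : ℕ) (x : E) :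
    ‖x‖ ≤ ‖(T ^ k) x‖ := by
  induction k generalizing x with
  | zero => simp
  | succ k ih => exact (hT x).trans (by simpa [pow_succ] using ih (T x))

end Operators

section NormIncreasing

variable {𝕜 E F : Type*} [RCLike 𝕜] [NormedAddCommGroup E] [InnerProductSpace 𝕜 E]
  [NormedAddCommGroup F] [InnerProductSpace 𝕜 F] [CompleteSpace E] [CompleteSpace F]

theorem orthogonal_ker_adjoint_eq_range {S : E →L[𝕜] F} (hS : ∀ x, ‖x‖ ≤ ‖S x‖) :
    (LinearMap.ker (adjoint S : F →ₗ[𝕜] E))ᗮ = LinearMap.range (S : E →ₗ[𝕜] F) := by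
  have hclosed : IsClosed (LinearMap.range (S : E →ₗ[𝕜] F) : Set F) := by
    rw [LinearMap.coe_range]
    exact (S.antilipschitz_of_bound (K := 1) (by simpa using hS)).isClosed_range
      S.uniformContinuous
  rw [orthogonal_ker, adjoint_adjoint, hclosed.submodule_topologicalClosure_eq]

theorem ker_adjoint_pow_mono (T : E →L[𝕜] E) :
    Monotone fun k : ℕ => LinearMap.ker (adjoint (T ^ k) : E →ₗ[𝕜] E) := by
  refine monotone_nat_of_le_succ fun k b hb => ?_
  rw [LinearMap.mem_ker, coe_coe] at hb ⊢
  rw [pow_succ, mul_def, adjoint_comp, comp_apply, hb, map_zero]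

theorem dense_iUnion_ker_adjoint_pow {T : E →L[𝕜] E} (hT : ∀ x, ‖x‖ ≤ ‖T x‖)
    (hanalytic : ∀ x : E,
      (∀ n : ℕ, x ∈ LinearMap.range ((T ^ n : E →L[𝕜] E) : E →ₗ[𝕜] E)) → x = 0) :
    Dense (⋃ k : ℕ, (LinearMap.ker (adjoint (T ^ k) : E →ₗ[𝕜] E) : Set E)) := by
  rw [← Submodule.coe_iSup_of_directed _ (ker_adjoint_pow_mono T).directed_le,
    Submodule.dense_iff_topologicalClosure_eq_top, Submodule.topologicalClosure_eq_top_iff,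
    Submodule.eq_bot_iff]
  refine fun x hx => hanalytic x fun k => ?_
  rw [← orthogonal_ker_adjoint_eq_range (norm_le_norm_pow_apply hT k)]
  exact Submodule.orthogonal_le (le_iSup _ k) hx

end NormIncreasing

section WeaklyNull

variable {𝕜 E : Type*} [RCLike 𝕜] [NormedAddCommGroup E] [InnerProductSpace 𝕜 E]

theorem tendsto_inner_of_dense {v : ℕ → E} {C : ℝ≥0} (hv : ∀ n, ‖v n‖ ≤ C) {D : Set E}
    (hD : Dense D) (hvD : ∀ b ∈ D, Tendsto (fun n => ⟪b, v n⟫_𝕜) atTop (𝓝 0)) (y : E) :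
    Tendsto (fun n => ⟪y, v n⟫_𝕜) atTop (𝓝 0) := by
  have hlip : ∀ n, LipschitzWith C fun y : E => ⟪y, v n⟫_𝕜 := fun n =>
    LipschitzWith.of_dist_le_mul fun y z => by
      rw [dist_eq_norm, dist_eq_norm, ← inner_sub_left, mul_comm]
      exact (norm_inner_le_norm _ _).trans (by gcongr; exact hv n)
  have hclosed := Equicontinuous.isClosed_setOfPred_tendsto (l := atTop)
    (LipschitzWith.uniformEquicontinuous _ C hlip).equicontinuous
    (f := fun _ => (0 : 𝕜)) continuous_const
  have hsub : D ⊆ {y | Tendsto (fun n => ⟪y, v n⟫_𝕜) atTop (𝓝 0)} := hvD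
  exact (hD.closure_eq ▸ closure_minimal hsub hclosed : _) (Set.mem_univ y)

variable [CompleteSpace E] {T : E →L[𝕜] E} {μ : 𝕜} {v : ℕ → E}

theorem tendsto_inner_of_mem_ker_adjoint_pow (hμ : μ ≠ 0)
    (hv : Tendsto (fun n => T (v n) - μ • v n) atTop (𝓝 0)) {k : ℕ} {b : E}
    (hb : adjoint (T ^ k) b = 0) : Tendsto (fun n => ⟪b, v n⟫_𝕜) atTop (𝓝 0) := by
  have h := (tendsto_const_nhds (x := b)).inner (𝕜 := 𝕜) (tendsto_pow_apply_sub_smul hv k)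
  rw [inner_zero_right] at h
  have h' := h.const_mul (-(μ ^ k)⁻¹)
  rw [mul_zero] at h'
  refine h'.congr fun n => ?_
  rw [inner_sub_right, inner_smul_right, ← adjoint_inner_left, hb, inner_zero_left, zero_sub,
    mul_neg, neg_mul, neg_neg, inv_mul_cancel_left₀ (pow_ne_zero k hμ)]

theorem tendsto_inner_of_analytic (hT : ∀ x, ‖x‖ ≤ ‖T x‖)
    (hanalytic : ∀ x : E,
      (∀ n : ℕ, x ∈ LinearMap.range ((T ^ n : E →L[𝕜] E) : E →ₗ[𝕜] E)) → x = 0)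
    (hμ : μ ≠ 0) {C : ℝ≥0} (hvC : ∀ n, ‖v n‖ ≤ C)
    (hv : Tendsto (fun n => T (v n) - μ • v n) atTop (𝓝 0)) (y : E) :
    Tendsto (fun n => ⟪y, v n⟫_𝕜) atTop (𝓝 0) := by
  refine tendsto_inner_of_dense hvC (dense_iUnion_ker_adjoint_pow hT hanalytic) ?_ y
  simp only [Set.mem_iUnion, SetLike.mem_coe, LinearMap.mem_ker, coe_coe]
  rintro b ⟨k, hb⟩
  exact tendsto_inner_of_mem_ker_adjoint_pow hμ hv hb

end WeaklyNull

section CauchyDual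

variable {𝕜 E : Type*} [RCLike 𝕜] [NormedAddCommGroup E] [InnerProductSpace 𝕜 E] [CompleteSpace E]
  {T : E →L[𝕜] E}

noncomputable def cauchyDual (T : E →L[𝕜] E) : E →L[𝕜] E :=
  T ∘L Ring.inverse (adjoint T ∘L T)

theorem cauchyDual_apply (x : E) :
    cauchyDual T x = T (Ring.inverse (adjoint T ∘L T) x) :=
  rfl

theorem adjoint_apply_cauchyDual_apply (hunit : IsUnit (adjoint T ∘L T)) (x : E) :
    adjoint T (cauchyDual T x) = x :=
  congr($(Ring.mul_inverse_cancel _ hunit) x)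

theorem norm_cauchyDual_apply_sq (hunit : IsUnit (adjoint T ∘L T)) (x : E) :
    ‖cauchyDual T x‖ ^ 2 = RCLike.re ⟪x, Ring.inverse (adjoint T ∘L T) x⟫_𝕜 := by
  rw [← inner_self_eq_norm_sq (𝕜 := 𝕜)]
  congr 1
  calc ⟪cauchyDual T x, T (Ring.inverse (adjoint T ∘L T) x)⟫_𝕜
      = ⟪adjoint T (cauchyDual T x), Ring.inverse (adjoint T ∘L T) x⟫_𝕜 :=
        (adjoint_inner_left _ _ _).symm
    _ = ⟪x, Ring.inverse (adjoint T ∘L T) x⟫_𝕜 := by rw [adjoint_apply_cauchyDual_apply hunit]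

variable (hT : ∀ x, ‖x‖ ≤ ‖T x‖) (hunit : IsUnit (adjoint T ∘L T))
include hT hunit

theorem norm_inverse_apply_sq_le (x : E) :
    ‖Ring.inverse (adjoint T ∘L T) x‖ ^ 2 ≤ RCLike.re ⟪x, Ring.inverse (adjoint T ∘L T) x⟫_𝕜 := by
  rw [← norm_cauchyDual_apply_sq hunit, cauchyDual_apply]
  exact pow_le_pow_left₀ (norm_nonneg _) (hT _) 2

theorem norm_cauchyDual_apply_le (x : E) : ‖cauchyDual T x‖ ≤ ‖x‖ := by
  have hB := norm_inverse_apply_sq_le hT hunit x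
  have hre := (RCLike.re_le_norm ⟪x, Ring.inverse (adjoint T ∘L T) x⟫_𝕜).trans
    (norm_inner_le_norm (𝕜 := 𝕜) x _)
  have hsq := norm_cauchyDual_apply_sq hunit x
  rw [← pow_le_pow_iff_left₀ (norm_nonneg _) (norm_nonneg _) two_ne_zero]
  nlinarith [norm_nonneg x, norm_nonneg (Ring.inverse (adjoint T ∘L T) x)]

theorem norm_sub_inverse_apply_sq_le (x : E) :
    ‖x - Ring.inverse (adjoint T ∘L T) x‖ ^ 2 ≤ ‖x‖ ^ 2 - ‖cauchyDual T x‖ ^ 2 := by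
  rw [@norm_sub_sq 𝕜, norm_cauchyDual_apply_sq hunit]
  linarith [norm_inverse_apply_sq_le hT hunit x]

variable {μ : 𝕜} {v : ℕ → E} (hv1 : ∀ n, ‖v n‖ = 1)
  (hv : Tendsto (fun n => cauchyDual T (v n) - μ • v n) atTop (𝓝 0))
include hv1 hv

theorem norm_eq_one_of_tendsto_cauchyDual_sub_smul (hspec : ∀ z ∈ spectrum 𝕜 T, ‖z‖ ≤ 1) :
    ‖μ‖ = 1 := by
  have hadj : Tendsto (fun n => v n - μ • adjoint T (v n)) atTop (𝓝 0) := by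
    have h := ((adjoint T).continuous.tendsto 0).comp hv
    simpa only [Function.comp_def, map_zero, map_sub, map_smul,
      adjoint_apply_cauchyDual_apply hunit] using h
  obtain ⟨hμ, hadj⟩ := tendsto_apply_sub_inv_smul hv1 hadj
  have hmem : star μ⁻¹ ∈ spectrum 𝕜 T := by
    have h := mem_spectrum_of_tendsto_sub_smul hv1 hadj
    rwa [← star_eq_adjoint, spectrum.map_star, Set.mem_star] at h
  have hge : 1 ≤ ‖μ‖ := by
    have h := hspec _ hmem
    rwa [norm_star, norm_inv, inv_le_one₀ (norm_pos_iff.mpr hμ)] at h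
  have hle : ‖μ‖ ≤ 1 :=
    le_of_tendsto' (tendsto_norm_apply_of_tendsto_sub_smul hv1 hv)
      fun n => (norm_cauchyDual_apply_le hT hunit _).trans_eq (hv1 n)
  exact le_antisymm hle hge

theorem tendsto_apply_sub_smul_of_tendsto_cauchyDual_sub_smul (hμ : ‖μ‖ = 1) :
    Tendsto (fun n => T (v n) - μ • v n) atTop (𝓝 0) := by
  have hdefect : Tendsto (fun n => 1 - ‖cauchyDual T (v n)‖ ^ 2) atTop (𝓝 0) := by
    have h := (tendsto_norm_apply_of_tendsto_sub_smul hv1 hv).pow 2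
    simpa [hμ] using (tendsto_const_nhds (x := (1 : ℝ))).sub h
  have hB : Tendsto (fun n => v n - Ring.inverse (adjoint T ∘L T) (v n)) atTop (𝓝 0) := by
    have hsq := squeeze_zero (fun n => sq_nonneg _)
      (fun n => by simpa [hv1] using norm_sub_inverse_apply_sq_le hT hunit (v n)) hdefect
    rw [tendsto_zero_iff_norm_tendsto_zero]
    simpa [Real.sqrt_sq (norm_nonneg _)] using hsq.sqrt
  have h := ((T.continuous.tendsto 0).comp hB).add hv
  rw [map_zero, zero_add] at h
  refine h.congr fun n => ?_
  rw [Function.comp_apply, map_sub, cauchyDual_apply]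
  abel

end CauchyDual

theorem stmt4_general {H : Type*} [NormedAddCommGroup H] [InnerProductSpace ℂ H] [CompleteSpace H]
    (T : H →L[ℂ] H)
    (hexp : ∀ x : H, ‖x‖ ≤ ‖T x‖)
    (hanalytic : ∀ x : H, (∀ n : ℕ, x ∈ LinearMap.range ((T ^ n : H →L[ℂ] H) : H →ₗ[ℂ] H)) → x = 0)
    (hspec : ∀ z ∈ spectrum ℂ T, ‖z‖ ≤ 1)
    (hunit : IsUnit ((adjoint T) ∘L T))
    (T' : H →L[ℂ] H) (hT' : T' = T ∘L Ring.inverse ((adjoint T) ∘L T))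
    (M : Submodule ℂ H)
    (lam : ℂ) (v : ℕ → H) (hvM : ∀ n, v n ∈ M) (hvnorm : ∀ n, ‖v n‖ = 1)
    (hvconv : Filter.Tendsto (fun n => T' (v n) - lam • v n) Filter.atTop (nhds 0)) :
    ∃ u : ℕ → H, (∀ n, u n ∈ M) ∧ (∀ n, ‖u n‖ = 1) ∧
      (∀ y : H, Filter.Tendsto (fun n => (inner ℂ y (u n) : ℂ)) Filter.atTop (nhds 0)) ∧
      Filter.Tendsto (fun n => T (u n) - lam • u n) Filter.atTop (nhds 0) ∧
      Filter.Tendsto (fun n => T' (u n) - lam • u n) Filter.atTop (nhds 0) := by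
  subst hT'
  have hlam := norm_eq_one_of_tendsto_cauchyDual_sub_smul hexp hunit hvnorm hvconv hspec
  have hTv := tendsto_apply_sub_smul_of_tendsto_cauchyDual_sub_smul hexp hunit hvnorm hvconv hlam
  have hlam0 : lam ≠ 0 := norm_ne_zero_iff.mp (hlam ▸ one_ne_zero)
  exact ⟨v, hvM, hvnorm,
    tendsto_inner_of_analytic hexp hanalytic hlam0 (C := 1) (fun n => (hvnorm n).le) hTv,
    hTv, hvconv⟩

/-- If `T` is an analytic norm-increasing operator with spectrum in the closed unit
disc and `M` is a nonzero closed invariant subspace of the Cauchy dual `T'`, then for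
every `λ` in the approximate point spectrum of `T'|_M` there is a weakly null sequence
of unit vectors `(u n)` in `M` which is a Weyl sequence for both `(λ, T)` and `(λ, T')`. -/
theorem stmt4 {H : Type*} [NormedAddCommGroup H] [InnerProductSpace ℂ H] [CompleteSpace H]
    (T : H →L[ℂ] H)
    (hexp : ∀ x : H, ‖x‖ ≤ ‖T x‖)
    (hanalytic : ∀ x : H, (∀ n : ℕ, x ∈ LinearMap.range ((T ^ n : H →L[ℂ] H) : H →ₗ[ℂ] H)) → x = 0)
    (hspec : ∀ z ∈ spectrum ℂ T, ‖z‖ ≤ 1)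
    (hunit : IsUnit ((adjoint T) ∘L T))
    (T' : H →L[ℂ] H) (hT' : T' = T ∘L Ring.inverse ((adjoint T) ∘L T))
    (M : Submodule ℂ H) (hMclosed : IsClosed (M : Set H)) (hM0 : M ≠ ⊥)
    (hMinv : ∀ x ∈ M, T' x ∈ M)
    (lam : ℂ) (v : ℕ → H) (hvM : ∀ n, v n ∈ M) (hvnorm : ∀ n, ‖v n‖ = 1)
    (hvconv : Filter.Tendsto (fun n => T' (v n) - lam • v n) Filter.atTop (nhds 0)) :
    ∃ u : ℕ → H, (∀ n, u n ∈ M) ∧ (∀ n, ‖u n‖ = 1) ∧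
      (∀ y : H, Filter.Tendsto (fun n => (inner ℂ y (u n) : ℂ)) Filter.atTop (nhds 0)) ∧
      Filter.Tendsto (fun n => T (u n) - lam • u n) Filter.atTop (nhds 0) ∧
      Filter.Tendsto (fun n => T' (u n) - lam • u n) Filter.atTop (nhds 0) :=
  stmt4_general T hexp hanalytic hspec hunit T' hT' M lam v hvM hvnorm hvconv
end

section
/- In a rootless, leafless directed tree T = (V, E), for each vertex v the generation G_v of v equals the disjoint union over n ∈ ℕ of the sets A(v,n), where A(v,0) = {v} and A(v,n) = Chi^n(par^n(v)) \ Chi^{n-1}(par^{n-1}(v)) for n ≥ 1. -/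
/-- A countably infinite, leafless, rootless directed tree, encoded by its parent
function: every vertex has a child (leafless), there are no circuits, and the tree
is connected (any two vertices have a common ancestor). -/
structure RootlessTree (V : Type*) where
  par : V → V
  leafless : ∀ u : V, ∃ w : V, par w = u
  acyclic : ∀ (u : V) (n : ℕ), 0 < n → par^[n] u ≠ u
  connected : ∀ u w : V, ∃ k l : ℕ, par^[k] u = par^[l] w

/-- `Aset T v n` is the set `A(v,n)`: `A(v,0) = {v}` and
`A(v,n) = Chi^n(par^n(v)) \ Chi^{n-1}(par^{n-1}(v))` for `n ≥ 1`. -/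
def Aset {V : Type*} (T : RootlessTree V) (v : V) : ℕ → Set V
  | 0 => {v}
  | n + 1 => {w | T.par^[n + 1] w = T.par^[n + 1] v ∧ ¬ T.par^[n] w = T.par^[n] v}

lemma par_mono {V : Type*} (T : RootlessTree V) (v w : V) {m k : ℕ} (h : m ≤ k)
    (hm : T.par^[m] w = T.par^[m] v) : T.par^[k] w = T.par^[k] v := by
  obtain ⟨d, rfl⟩ := Nat.exists_eq_add_of_le h
  rw [Nat.add_comm, Function.iterate_add_apply, Function.iterate_add_apply, hm]

lemma mem_Aset {V : Type*} (T : RootlessTree V) (v w : V) {n : ℕ} (hw : w ∈ Aset T v n) :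
    T.par^[n] w = T.par^[n] v := by
  cases n with
  | zero => simpa [Aset] using hw
  | succ n => exact hw.1

/-- The generation `G_v` is the disjoint union of the sets `A(v,n)`, `n ∈ ℕ`. -/
theorem stmt7 {V : Type*} [Countable V] [Infinite V] (T : RootlessTree V) (v : V) :
    ({w : V | ∃ n : ℕ, T.par^[n] w = T.par^[n] v} = ⋃ n : ℕ, Aset T v n) ∧
      ∀ m n : ℕ, m ≠ n → Disjoint (Aset T v m) (Aset T v n) := by
  constructor
  · ext w
    simp only [Set.mem_setOf_eq, Set.mem_iUnion]
    constructor
    · rintro h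
      classical
      set n := Nat.find h with hn
      have hspec : T.par^[n] w = T.par^[n] v := Nat.find_spec h
      refine ⟨n, ?_⟩
      cases hnn : n with
      | zero =>
        simp only [Aset]
        rw [hnn] at hspec
        simpa using hspec
      | succ k =>
        refine ⟨by rw [← hnn]; exact hspec, ?_⟩
        have := Nat.find_min h (m := k) (by omega)
        exact this
    · rintro ⟨n, hw⟩
      exact ⟨n, mem_Aset T v w hw⟩
  · intro m n hmn
    rw [Set.disjoint_left]
    rintro w hwm hwn
    wlog hlt : m < n generalizing m n
    · exact this n m hmn.symm hwn hwm (by omega)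
    have hm : T.par^[m] w = T.par^[m] v := mem_Aset T v w hwm
    cases n with
    | zero => omega
    | succ k =>
      exact hwn.2 (par_mono T v w (by omega) hm)
end

section
/- In a rootless, leafless directed tree, for any bilateral path {v_m}_{m∈ℤ} (where v_{m-1} = par(v_m) for all m), the vertex set V is the disjoint union over m ∈ ℤ of the generations G_{v_m}. -/
lemma path_iter {V : Type*} (T : RootlessTree V) (v : ℤ → V)
    (hpath : ∀ m : ℤ, T.par (v m) = v (m - 1)) :
    ∀ (n : ℕ) (m : ℤ), T.par^[n] (v m) = v (m - n) := by
  intro n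
  induction n with
  | zero => intro m; simp
  | succ n ih =>
    intro m
    rw [Function.iterate_succ_apply, hpath, ih]
    congr 1; push_cast; ring

lemma path_inj {V : Type*} (T : RootlessTree V) (v : ℤ → V)
    (hpath : ∀ m : ℤ, T.par (v m) = v (m - 1)) :
    Function.Injective v := by
  have key : ∀ a b : ℤ, a < b → v a = v b → False := by
    intro a b h hab
    have hpos : 0 < (b - a).toNat := by omega
    refine T.acyclic (v b) ((b - a).toNat) hpos ?_
    rw [path_iter T v hpath]
    rw [show b - ((b - a).toNat : ℤ) = a by omega, hab]
  intro a b hab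
  by_contra hne
  rcases lt_or_gt_of_ne hne with h | h
  · exact key a b h hab
  · exact key b a h hab.symm

/-- For any bilateral path `{v_m}_{m ∈ ℤ}`, the vertex set is the disjoint union of
the generations `G_{v_m}`, `m ∈ ℤ`. -/
theorem stmt11 {V : Type*} [Countable V] [Infinite V] (T : RootlessTree V)
    (v : ℤ → V) (hpath : ∀ m : ℤ, T.par (v m) = v (m - 1)) :
    (∀ u : V, ∃ m : ℤ, ∃ n : ℕ, T.par^[n] u = T.par^[n] (v m)) ∧
      ∀ m m' : ℤ, m ≠ m' →
        Disjoint {u : V | ∃ n : ℕ, T.par^[n] u = T.par^[n] (v m)}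
          {u : V | ∃ n : ℕ, T.par^[n] u = T.par^[n] (v m')} := by
  constructor
  · intro u
    obtain ⟨k, l, hkl⟩ := T.connected u (v 0)
    refine ⟨(k : ℤ) - l, k, ?_⟩
    rw [hkl, path_iter T v hpath, path_iter T v hpath]
    ring_nf
  · intro m m' hne
    rw [Set.disjoint_left]
    rintro u ⟨n, hn⟩ ⟨n', hn'⟩
    wlog h : n ≤ n' generalizing m m' n n'
    · exact this m' m (Ne.symm hne) n' hn' n hn (by omega)
    have : T.par^[n'] u = T.par^[n' - n] (T.par^[n] u) := by
      rw [← Function.iterate_add_apply]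
      congr 1; omega
    rw [hn, path_iter T v hpath, path_iter T v hpath] at this
    rw [path_iter T v hpath] at hn'
    rw [this] at hn'
    have := path_inj T v hpath hn'
    omega
end

section
/- Let T = (V,E) be a rootless, leafless directed tree with positive weights λ = {λ_v}_{v∈V}, and define α_λ(v) = Σ_{n≥0} Σ_{u∈A(v,n)} (λ^{(n)}(u)/λ^{(n)}(v))², where λ^{(0)} = 1 and λ^{(n)}(u) = λ_u · λ_{par(u)} ⋯ λ_{par^{n-1}(u)}. If v and w belong to the same generation, then α_λ(v) < ∞ if and only if α_λ(w) < ∞. -/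
open scoped ENNReal

/-- `lamN T wt n u` is `λ⁽ⁿ⁾(u) = λ_u · λ_{par u} ⋯ λ_{parⁿ⁻¹ u}`. -/
def lamN {V : Type*} (T : RootlessTree V) (wt : V → ℝ) (n : ℕ) (u : V) : ℝ :=
  ∏ j ∈ Finset.range n, wt (T.par^[j] u)

/-- `alphaFun T wt v = α_λ(v) = Σ_{n≥0} Σ_{u ∈ A(v,n)} (λ⁽ⁿ⁾(u)/λ⁽ⁿ⁾(v))²`,
as an extended nonnegative real. -/
noncomputable def alphaFun {V : Type*} (T : RootlessTree V) (wt : V → ℝ) (v : V) : ℝ≥0∞ :=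
  ∑' n : ℕ, ∑' u : (Aset T v n), ENNReal.ofReal ((lamN T wt n u / lamN T wt n v) ^ 2)

section Aux

variable {V : Type*} (T : RootlessTree V) (wt : V → ℝ)

lemma lamN_pos (hwt : ∀ u : V, 0 < wt u) (n : ℕ) (u : V) : 0 < lamN T wt n u :=
  Finset.prod_pos fun _ _ => hwt _

lemma par_prop {u v : V} {n k : ℕ} (h : T.par^[n] u = T.par^[n] v) (hnk : n ≤ k) :
    T.par^[k] u = T.par^[k] v := by
  obtain ⟨m, rfl⟩ := Nat.exists_eq_add_of_le hnk
  rw [add_comm, Function.iterate_add_apply, Function.iterate_add_apply, h]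

lemma lamN_add (n m : ℕ) (u : V) :
    lamN T wt (n + m) u = lamN T wt n u * lamN T wt m (T.par^[n] u) := by
  unfold lamN
  rw [Finset.prod_range_add]
  congr 1
  apply Finset.prod_congr rfl
  intro j _
  rw [add_comm, Function.iterate_add_apply]

lemma lamN_ratio (hwt : ∀ u : V, 0 < wt u) {u v : V} {n k : ℕ}
    (h : T.par^[n] u = T.par^[n] v) (hnk : n ≤ k) :
    lamN T wt k u / lamN T wt k v = lamN T wt n u / lamN T wt n v := by
  obtain ⟨m, rfl⟩ := Nat.exists_eq_add_of_le hnk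
  rw [lamN_add, lamN_add, h,
    mul_div_mul_right _ _ (lamN_pos T wt hwt m (T.par^[n] v)).ne']

lemma mem_Aset_iff {u v : V} {n : ℕ} :
    u ∈ Aset T v n ↔
      (T.par^[n] u = T.par^[n] v ∧ ∀ m < n, T.par^[m] u ≠ T.par^[m] v) := by
  cases n with
  | zero => simp [Aset]
  | succ n =>
    simp only [Aset, Set.mem_setOf_eq]
    constructor
    · rintro ⟨h1, h2⟩
      refine ⟨h1, fun m hm hme => h2 ?_⟩
      exact par_prop T hme (Nat.lt_succ_iff.mp hm)
    · rintro ⟨h1, h2⟩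
      exact ⟨h1, h2 n (Nat.lt_succ_self n)⟩

lemma pointwise (hwt : ∀ u : V, 0 < wt u) {v w : V} {N : ℕ}
    (hN : T.par^[N] v = T.par^[N] w) (u : V) :
    (∑' n : ℕ, (Aset T v n).indicator
        (fun y => ENNReal.ofReal ((lamN T wt n y / lamN T wt n v) ^ 2)) u)
      = ENNReal.ofReal ((lamN T wt N w / lamN T wt N v) ^ 2) *
        ∑' n : ℕ, (Aset T w n).indicator
          (fun y => ENNReal.ofReal ((lamN T wt n y / lamN T wt n w) ^ 2)) u := by
  classical
  by_cases hex : ∃ n, T.par^[n] u = T.par^[n] v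
  · have hexw : ∃ m, T.par^[m] u = T.par^[m] w := by
      obtain ⟨n, hn⟩ := hex
      refine ⟨max n N, ?_⟩
      have h1 := par_prop T hn (le_max_left n N)
      have h2 := par_prop T hN (le_max_right n N)
      rw [h1, h2]
    set n₀ := Nat.find hex with hn₀
    set m₀ := Nat.find hexw with hm₀
    have hmemv : u ∈ Aset T v n₀ :=
      (mem_Aset_iff T).mpr ⟨Nat.find_spec hex, fun m hm => Nat.find_min hex hm⟩
    have hmemw : u ∈ Aset T w m₀ :=
      (mem_Aset_iff T).mpr ⟨Nat.find_spec hexw, fun m hm => Nat.find_min hexw hm⟩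
    have huniq : ∀ (x : V) (k : ℕ), u ∈ Aset T x k →
        ∀ n ≠ k, u ∉ Aset T x n := by
      intro x k hk n hne hn
      rw [mem_Aset_iff] at hk hn
      rcases lt_or_gt_of_ne hne with h | h
      · exact hk.2 n h hn.1
      · exact hn.2 k h hk.1
    rw [tsum_eq_single n₀ (fun n hn => Set.indicator_of_notMem
          (huniq v n₀ hmemv n hn) _),
        tsum_eq_single m₀ (fun n hn => Set.indicator_of_notMem
          (huniq w m₀ hmemw n hn) _),
        Set.indicator_of_mem hmemv, Set.indicator_of_mem hmemw]
    set K := max (max n₀ m₀) N with hK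
    have hKn : n₀ ≤ K := le_trans (le_max_left _ _) (le_max_left _ _)
    have hKm : m₀ ≤ K := le_trans (le_max_right _ _) (le_max_left _ _)
    have hKN : N ≤ K := le_max_right _ _
    have e1 : lamN T wt n₀ u / lamN T wt n₀ v = lamN T wt K u / lamN T wt K v :=
      (lamN_ratio T wt hwt (Nat.find_spec hex) hKn).symm
    have e2 : lamN T wt m₀ u / lamN T wt m₀ w = lamN T wt K u / lamN T wt K w :=
      (lamN_ratio T wt hwt (Nat.find_spec hexw) hKm).symm
    have e3 : lamN T wt N w / lamN T wt N v = lamN T wt K w / lamN T wt K v :=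
      (lamN_ratio T wt hwt hN.symm hKN).symm
    rw [e1, e2, e3, ← ENNReal.ofReal_mul (by positivity)]
    congr 1
    have hv := (lamN_pos T wt hwt K v).ne'
    have hw := (lamN_pos T wt hwt K w).ne'
    field_simp
  · have hexw : ¬ ∃ m, T.par^[m] u = T.par^[m] w := by
      rintro ⟨m, hm⟩
      refine hex ⟨max m N, ?_⟩
      have h1 := par_prop T hm (le_max_left m N)
      have h2 := par_prop T hN.symm (le_max_right m N)
      rw [h1, h2]
    have z1 : ∀ n : ℕ, (Aset T v n).indicator
        (fun y => ENNReal.ofReal ((lamN T wt n y / lamN T wt n v) ^ 2)) u = 0 := by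
      intro n
      apply Set.indicator_of_notMem
      intro hn
      exact hex ⟨n, ((mem_Aset_iff T).mp hn).1⟩
    have z2 : ∀ n : ℕ, (Aset T w n).indicator
        (fun y => ENNReal.ofReal ((lamN T wt n y / lamN T wt n w) ^ 2)) u = 0 := by
      intro n
      apply Set.indicator_of_notMem
      intro hn
      exact hexw ⟨n, ((mem_Aset_iff T).mp hn).1⟩
    simp [tsum_congr z1, tsum_congr z2]

lemma alphaFun_eq_mul (hwt : ∀ u : V, 0 < wt u) {v w : V} {N : ℕ}
    (hN : T.par^[N] v = T.par^[N] w) :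
    alphaFun T wt v =
      ENNReal.ofReal ((lamN T wt N w / lamN T wt N v) ^ 2) * alphaFun T wt w := by
  unfold alphaFun
  have hsub : ∀ (x : V) (n : ℕ),
      (∑' u : (Aset T x n), ENNReal.ofReal ((lamN T wt n u / lamN T wt n x) ^ 2))
        = ∑' u : V, (Aset T x n).indicator
            (fun y => ENNReal.ofReal ((lamN T wt n y / lamN T wt n x) ^ 2)) u :=
    fun x n => tsum_subtype (Aset T x n)
      (fun y => ENNReal.ofReal ((lamN T wt n y / lamN T wt n x) ^ 2))
  simp_rw [hsub]
  calc (∑' (n : ℕ) (u : V), (Aset T v n).indicator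
        (fun y => ENNReal.ofReal ((lamN T wt n y / lamN T wt n v) ^ 2)) u)
      = ∑' (u : V) (n : ℕ), (Aset T v n).indicator
        (fun y => ENNReal.ofReal ((lamN T wt n y / lamN T wt n v) ^ 2)) u :=
        ENNReal.tsum_comm
    _ = ∑' (u : V), ENNReal.ofReal ((lamN T wt N w / lamN T wt N v) ^ 2) *
        ∑' (n : ℕ), (Aset T w n).indicator
        (fun y => ENNReal.ofReal ((lamN T wt n y / lamN T wt n w) ^ 2)) u :=
        tsum_congr (pointwise T wt hwt hN)
    _ = ENNReal.ofReal ((lamN T wt N w / lamN T wt N v) ^ 2) *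
        ∑' (u : V) (n : ℕ), (Aset T w n).indicator
        (fun y => ENNReal.ofReal ((lamN T wt n y / lamN T wt n w) ^ 2)) u :=
        ENNReal.tsum_mul_left
    _ = ENNReal.ofReal ((lamN T wt N w / lamN T wt N v) ^ 2) *
        ∑' (n : ℕ) (u : V), (Aset T w n).indicator
        (fun y => ENNReal.ofReal ((lamN T wt n y / lamN T wt n w) ^ 2)) u := by
        rw [ENNReal.tsum_comm]

end Aux

/-- If `v` and `w` belong to the same generation, then `α_λ(v) < ∞ ↔ α_λ(w) < ∞`. -/
theorem stmt12 {V : Type*} [Countable V] [Infinite V] (T : RootlessTree V)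
    (wt : V → ℝ) (hwt : ∀ u : V, 0 < wt u)
    (v w : V) (hgen : ∃ n : ℕ, T.par^[n] v = T.par^[n] w) :
    alphaFun T wt v < ⊤ ↔ alphaFun T wt w < ⊤ := by
  obtain ⟨N, hN⟩ := hgen
  have h1 := alphaFun_eq_mul T wt hwt hN
  have h2 := alphaFun_eq_mul T wt hwt hN.symm
  constructor
  · intro h
    rw [h2]
    exact ENNReal.mul_lt_top ENNReal.ofReal_lt_top h
  · intro h
    rw [h1]
    exact ENNReal.mul_lt_top ENNReal.ofReal_lt_top h
end

section
/- Let S_λ be a bounded left-invertible weighted shift on a rootless, leafless directed tree. Then the hyper-range ∩_{n≥0} S_λ^n(ℓ²(V)) equals the set of f ∈ ℓ²(V) such that for every integer n ≥ 1 and every vertex v, the function f/λ^{(n)} is constant on Chi^n(v). -/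
open scoped ENNReal

section aux

variable {V : Type*} (T : RootlessTree V) (wt : V → ℝ)

lemma exists_iter_preimage (n : ℕ) (v : V) : ∃ w, T.par^[n] w = v := by
  induction n generalizing v with
  | zero => exact ⟨v, rfl⟩
  | succ n ih =>
    obtain ⟨w, hw⟩ := T.leafless v
    obtain ⟨u, hu⟩ := ih w
    exact ⟨u, by rw [Function.iterate_succ_apply', hu, hw]⟩

lemma pow_apply_shift (S : lp (fun _ : V => ℂ) 2 →L[ℂ] lp (fun _ : V => ℂ) 2)
    (hS : ∀ (f : lp (fun _ : V => ℂ) 2) (v : V), (S f) v = (wt v : ℂ) * f (T.par v))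
    (n : ℕ) (g : lp (fun _ : V => ℂ) 2) (u : V) :
    ((S ^ n) g) u = (lamN T wt n u : ℂ) * g (T.par^[n] u) := by
  induction n generalizing g with
  | zero => simp [lamN]
  | succ n ih =>
    have h1 : (S ^ (n + 1)) g = (S ^ n) (S g) := by rw [pow_succ]; rfl
    rw [h1, ih (S g), hS, Function.iterate_succ_apply']
    have : lamN T wt (n + 1) u = lamN T wt n u * wt (T.par^[n] u) :=
      Finset.prod_range_succ _ _
    rw [this]
    push_cast
    ring

lemma pow_left_bound (S : lp (fun _ : V => ℂ) 2 →L[ℂ] lp (fun _ : V => ℂ) 2)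
    {c : ℝ} (hc : 0 < c) (hcS : ∀ f : lp (fun _ : V => ℂ) 2, c * ‖f‖ ≤ ‖S f‖)
    (n : ℕ) (h : lp (fun _ : V => ℂ) 2) : c ^ n * ‖h‖ ≤ ‖(S ^ n) h‖ := by
  induction n with
  | zero => simp
  | succ n ih =>
    have h1 : (S ^ (n + 1)) h = S ((S ^ n) h) := by rw [pow_succ']; rfl
    calc c ^ (n + 1) * ‖h‖ = c * (c ^ n * ‖h‖) := by ring
      _ ≤ c * ‖(S ^ n) h‖ := by
          exact mul_le_mul_of_nonneg_left ih hc.le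
      _ ≤ ‖S ((S ^ n) h)‖ := hcS _
      _ = ‖(S ^ (n + 1)) h‖ := by rw [h1]

end aux

/-- The hyper-range `⋂_{n≥0} S_λⁿ(ℓ²(V))` of a bounded left-invertible weighted shift
consists exactly of those `f ∈ ℓ²(V)` such that `f/λ⁽ⁿ⁾` is constant on `Chiⁿ(v)` for
every vertex `v` and every `n ≥ 1`. -/
theorem stmt15 {V : Type*} [Countable V] [Infinite V] (T : RootlessTree V)
    (wt : V → ℝ) (hwt : ∀ u : V, 0 < wt u)
    (S : lp (fun _ : V => ℂ) 2 →L[ℂ] lp (fun _ : V => ℂ) 2)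
    (hS : ∀ (f : lp (fun _ : V => ℂ) 2) (v : V), (S f) v = (wt v : ℂ) * f (T.par v))
    (hleft : ∃ c : ℝ, 0 < c ∧ ∀ f : lp (fun _ : V => ℂ) 2, c * ‖f‖ ≤ ‖S f‖) :
    (⋂ n : ℕ, Set.range ⇑(S ^ n)) =
      {f : lp (fun _ : V => ℂ) 2 | ∀ n : ℕ, 1 ≤ n → ∀ v w₁ w₂ : V,
        T.par^[n] w₁ = v → T.par^[n] w₂ = v →
          f w₁ / (lamN T wt n w₁ : ℂ) = f w₂ / (lamN T wt n w₂ : ℂ)} := by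
  classical
  obtain ⟨c, hc, hcS⟩ := hleft
  have hlam : ∀ (n : ℕ) (u : V), (lamN T wt n u : ℂ) ≠ 0 := fun n u =>
    Complex.ofReal_ne_zero.mpr (lamN_pos T wt hwt n u).ne'
  have hp : (0 : ℝ) < (2 : ℝ≥0∞).toReal := by norm_num
  ext f
  simp only [Set.mem_iInter, Set.mem_range, Set.mem_setOf_eq]
  constructor
  · intro h n hn v w₁ w₂ h1 h2
    obtain ⟨g, hg⟩ := h n
    have e1 : f w₁ = (lamN T wt n w₁ : ℂ) * g v := by
      rw [← hg, pow_apply_shift T wt S hS, h1]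
    have e2 : f w₂ = (lamN T wt n w₂ : ℂ) * g v := by
      rw [← hg, pow_apply_shift T wt S hS, h2]
    rw [e1, e2, mul_div_cancel_left₀ _ (hlam n w₁), mul_div_cancel_left₀ _ (hlam n w₂)]
  · intro hf n
    rcases Nat.eq_zero_or_pos n with rfl | hn
    · exact ⟨f, by simp⟩
    choose W hW using exists_iter_preimage T
    set g : V → ℂ := fun v => f (W n v) / (lamN T wt n (W n v) : ℂ) with hgdef
    have key : ∀ u : V, f u = (lamN T wt n u : ℂ) * g (T.par^[n] u) := by
      intro u
      have h1 := hf n hn (T.par^[n] u) u (W n (T.par^[n] u)) rfl (hW n _)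
      rw [hgdef]
      dsimp only
      rw [← h1, mul_div_cancel₀ _ (hlam n u)]
    -- bound partial sums of g
    have hbound : ∀ F : Finset V,
        ∑ u ∈ F, ‖g u‖ ^ (2 : ℝ≥0∞).toReal ≤ (‖f‖ / c ^ n) ^ (2 : ℝ≥0∞).toReal := by
      intro F
      have hmem : Memℓp (fun u => if u ∈ F then g u else 0) 2 := by
        apply memℓp_gen
        apply summable_of_ne_finset_zero (s := F)
        intro u hu
        simp [if_neg hu, Real.zero_rpow hp.ne']
      set gF : lp (fun _ : V => ℂ) 2 := ⟨fun u => if u ∈ F then g u else 0, hmem⟩ with hgF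
      have hgFcoe : ∀ u, gF u = if u ∈ F then g u else 0 := fun u => rfl
      have hterm : ∀ u : V,
          ‖((S ^ n) gF) u‖ ^ (2 : ℝ≥0∞).toReal ≤ ‖f u‖ ^ (2 : ℝ≥0∞).toReal := by
        intro u
        rw [pow_apply_shift T wt S hS, hgFcoe]
        by_cases h : T.par^[n] u ∈ F
        · rw [if_pos h, ← key u]
        · rw [if_neg h, mul_zero, norm_zero, Real.zero_rpow hp.ne']
          exact Real.rpow_nonneg (norm_nonneg _) _
      have hnle : ‖(S ^ n) gF‖ ≤ ‖f‖ := by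
        rw [← Real.rpow_le_rpow_iff (norm_nonneg _) (norm_nonneg _) hp,
          lp.norm_rpow_eq_tsum hp, lp.norm_rpow_eq_tsum hp]
        exact Summable.tsum_le_tsum hterm ((lp.memℓp _).summable hp) ((lp.memℓp _).summable hp)
      have hgFnorm : ‖gF‖ ≤ ‖f‖ / c ^ n := by
        rw [le_div_iff₀ (pow_pos hc n)]
        calc ‖gF‖ * c ^ n = c ^ n * ‖gF‖ := by ring
          _ ≤ ‖(S ^ n) gF‖ := pow_left_bound S hc hcS n gF
          _ ≤ ‖f‖ := hnle
      have hsum : ∑ u ∈ F, ‖g u‖ ^ (2 : ℝ≥0∞).toReal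
          = ‖gF‖ ^ (2 : ℝ≥0∞).toReal := by
        rw [lp.norm_rpow_eq_tsum hp]
        rw [tsum_eq_sum (s := F) (fun u hu => by
          rw [hgFcoe, if_neg hu, norm_zero, Real.zero_rpow hp.ne'])]
        exact Finset.sum_congr rfl fun u hu => by rw [hgFcoe, if_pos hu]
      rw [hsum]
      exact Real.rpow_le_rpow (norm_nonneg _) hgFnorm hp.le
    have hg2 : Memℓp g 2 := memℓp_gen' hbound
    refine ⟨⟨g, hg2⟩, ?_⟩
    ext u
    rw [pow_apply_shift T wt S hS]
    exact (key u).symm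
end

section
/- Let S_λ be a bounded left-invertible weighted shift on a rootless, leafless directed tree, and let {v_m}_{m∈ℤ} be a bilateral path. Define g_m = Σ_{n≥0} Σ_{u∈A(v_m,n)} (λ^{(n)}(u)/λ^{(n)}(v_m)) e_u when α_λ(v_m) < ∞, and g_m = 0 otherwise. Then each g_m lies in ℓ²(V), the hyper-range ∩_{n≥0} S_λ^n(ℓ²(V)) is the orthogonal direct sum of the one-dimensional (or zero) spans of the g_m (m ∈ ℤ), and S_λ g_m = λ_{v_{m+1}} g_{m+1} for all m ∈ ℤ. -/
open scoped ENNReal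

lemma AntilipschitzWith.iterate {α : Type*} [PseudoEMetricSpace α] {K : NNReal} {f : α → α}
    (hf : AntilipschitzWith K f) (n : ℕ) : AntilipschitzWith (K ^ n) f^[n] := by
  induction n with
  | zero => simpa using AntilipschitzWith.id
  | succ n ih => simpa [pow_succ', Function.iterate_succ] using ih.comp hf

lemma ContinuousLinearMap.isClosed_range_pow_of_bound {𝕜 E : Type*} [NontriviallyNormedField 𝕜]
    [NormedAddCommGroup E] [NormedSpace 𝕜 E] [CompleteSpace E] (S : E →L[𝕜] E) {c : ℝ}
    (hc : 0 < c) (hcS : ∀ x, c * ‖x‖ ≤ ‖S x‖) (n : ℕ) : IsClosed (Set.range (S ^ n)) := by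
  have hS : AntilipschitzWith (Real.toNNReal c⁻¹) S := S.antilipschitz_of_bound fun x => by
    rw [Real.coe_toNNReal _ (inv_nonneg.2 hc.le), inv_mul_eq_div, le_div_iff₀' hc]
    exact hcS x
  have hSn := hS.iterate n
  rw [← FunLike.coe_pow_eq_iterate] at hSn
  exact hSn.isClosed_range (S ^ n).uniformContinuous

lemma memℓp_two_iff_of_apply_eq_mul_comp {V 𝕜 : Type*} [NormedField 𝕜]
    {S : lp (fun _ : V => 𝕜) 2 → lp (fun _ : V => 𝕜) 2}
    {a : V → 𝕜} {σ : V → V} (hS : ∀ f u, S f u = a u * f (σ u))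
    {c : ℝ} (hc : 0 < c) (hcS : ∀ f, c * ‖f‖ ≤ ‖S f‖) (x : V → 𝕜) :
    Memℓp x 2 ↔ Memℓp (fun u => a u * x (σ u)) 2 := by
  classical
  constructor
  · intro hx
    convert lp.memℓp (S ⟨x, hx⟩) using 1
    funext u
    rw [hS]
  · intro hy
    let y : lp (fun _ : V => 𝕜) 2 := ⟨_, hy⟩
    refine memℓp_gen' (C := (‖y‖ / c) ^ (2 : ℝ≥0∞).toReal) fun s => ?_
    -- the truncation of `x` to `s` is in `ℓ²`, and `S` of it is dominated by `y`
    let xs : lp (fun _ : V => 𝕜) 2 := ∑ i ∈ s, lp.single 2 i (x i)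
    have hxs (j : V) : xs j = if j ∈ s then x j else 0 := by
      simp only [xs, lp.coeFn_sum, lp.coeFn_single, Finset.sum_apply, Finset.sum_pi_single]
    have hle : c * ‖xs‖ ≤ ‖y‖ := (hcS xs).trans <| lp.norm_mono two_ne_zero fun u => by
      rw [hS, hxs]
      change _ ≤ ‖a u * x (σ u)‖
      split_ifs
      · rfl
      · rw [mul_zero, norm_zero]
        exact norm_nonneg _
    rw [← lp.norm_sum_single (by norm_num)]
    exact Real.rpow_le_rpow (norm_nonneg _) ((le_div_iff₀' hc).2 hle) (by norm_num)

lemma tsum_ofReal_sq_lt_top_iff_memℓp {V 𝕜 : Type*} [RCLike 𝕜] (x : V → ℝ) :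
    ∑' u, ENNReal.ofReal (x u ^ 2) < ⊤ ↔ Memℓp (fun u => (x u : 𝕜)) 2 := by
  rw [lt_top_iff_ne_top, memℓp_gen_iff (by norm_num)]
  simp only [ENNReal.ofReal, ENNReal.tsum_coe_ne_top_iff_summable_coe,
    Real.coe_toNNReal _ (sq_nonneg _), RCLike.norm_ofReal, ENNReal.toReal_ofNat,
    Real.rpow_two, sq_abs]

lemma lp.inner_eq_zero_of_forall_eq_zero_or {V 𝕜 : Type*} [RCLike 𝕜]
    {f g : lp (fun _ : V => 𝕜) 2} (h : ∀ u, f u = 0 ∨ g u = 0) : inner 𝕜 f g = 0 := by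
  have hzero (u : V) : (inner 𝕜 (f u) (g u) : 𝕜) = 0 := by
    rcases h u with h | h <;> simp [h]
  rw [lp.inner_eq_tsum, tsum_congr hzero, tsum_zero]

lemma lp.mem_closure_span_of_fiberwise {V ι 𝕜 : Type*} [RCLike 𝕜] (lev : V → ι)
    {g : ι → lp (fun _ : V => 𝕜) 2} (hg : ∀ m u, lev u ≠ m → g m u = 0) {f : lp (fun _ : V => 𝕜) 2} (c : ι → 𝕜)
    (hf : ∀ u, f u = c (lev u) * g (lev u) u) :
    f ∈ closure (Submodule.span 𝕜 (Set.range g) : Set (lp (fun _ : V => 𝕜) 2)) := by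
  rw [← Submodule.topologicalClosure_coe, ← Submodule.orthogonal_orthogonal_eq_closure,
    SetLike.mem_coe, Submodule.mem_orthogonal]
  intro y hy
  have hfiber (m : ι) : ∑' u : lev ⁻¹' {m}, (inner 𝕜 (y u) (f u) : 𝕜) = 0 := calc
    _ = c m * ∑' u : lev ⁻¹' {m}, (inner 𝕜 (y u) (g m u) : 𝕜) := by
        rw [← tsum_mul_left]
        refine tsum_congr fun u => ?_
        rw [hf, u.2, ← smul_eq_mul, inner_smul_right]
    _ = c m * inner 𝕜 y (g m) := by
        rw [lp.inner_eq_tsum]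
        congr 1
        exact tsum_subtype_eq_of_support_subset
          (f := fun u => (inner 𝕜 (y u) (g m u) : 𝕜)) fun u hu => by
            by_contra hum
            exact hu (by simp only [hg m u hum, inner_zero_right])
    _ = 0 := by
        rw [Submodule.inner_left_of_mem_orthogonal
          (Submodule.subset_span (Set.mem_range_self m)) hy, mul_zero]
  have hsum : HasSum (fun u : V => (inner 𝕜 (y u) (f u) : 𝕜)) (inner 𝕜 y f) :=
    lp.hasSum_inner y f
  have hsum_fiber := hsum.tsum_fiberwise lev
  simp only [hfiber] at hsum_fiber
  exact hsum_fiber.unique hasSum_zero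

namespace RootlessTree

variable {V : Type*} (T : RootlessTree V)

def generation (w : V) : Set V := {u | ∃ n : ℕ, T.par^[n] u = T.par^[n] w}

variable {T}

lemma iterate_par_eq_of_le {a b : V} {n k : ℕ} (h : T.par^[n] a = T.par^[n] b) (hnk : n ≤ k) :
    T.par^[k] a = T.par^[k] b := by
  obtain ⟨j, rfl⟩ := Nat.exists_eq_add_of_le hnk
  rw [add_comm, Function.iterate_add_apply, Function.iterate_add_apply, h]

lemma mem_generation_of_par_mem {u w : V} (h : T.par u ∈ T.generation (T.par w)) :
    u ∈ T.generation w := by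
  obtain ⟨n, hn⟩ := h
  exact ⟨n + 1, by rwa [Function.iterate_succ_apply, Function.iterate_succ_apply]⟩

open scoped Classical in
lemma mem_Aset_iff {w u : V} {n : ℕ} :
    u ∈ Aset T w n ↔ ∃ h : u ∈ T.generation w, Nat.find h = n := by
  rcases n with _ | n
  · rw [Aset, Set.mem_singleton_iff]
    constructor
    · rintro rfl
      exact ⟨⟨0, rfl⟩, Nat.find_eq_zero _ |>.2 rfl⟩
    · rintro ⟨h, hfind⟩
      exact Nat.find_eq_zero h |>.1 hfind
  · rw [Aset, Set.mem_ofPred_eq]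
    constructor
    · rintro ⟨hsucc, hn⟩
      exact ⟨⟨_, hsucc⟩, (Nat.find_eq_iff _).2
        ⟨hsucc, fun k hk hkeq => hn (iterate_par_eq_of_le hkeq (by omega))⟩⟩
    · rintro ⟨h, hfind⟩
      obtain ⟨hsucc, hmin⟩ := (Nat.find_eq_iff h).1 hfind
      exact ⟨hsucc, hmin n n.lt_succ_self⟩

variable (T) in
open scoped Classical in
/-- The paper's coefficient `λ⁽ⁿ⁾(u)/λ⁽ⁿ⁾(w)`, which does not depend on the choice of `n` with
`parⁿ u = parⁿ w` (`lamRatio_eq`). -/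
noncomputable def lamRatio (wt : V → ℝ) (w u : V) : ℝ :=
  if h : u ∈ T.generation w then lamN T wt (Nat.find h) u / lamN T wt (Nat.find h) w else 0

variable {wt : V → ℝ}

lemma lamN_succ (n : ℕ) (u : V) : lamN T wt (n + 1) u = lamN T wt n u * wt (T.par^[n] u) :=
  Finset.prod_range_succ _ _

lemma lamN_succ' (n : ℕ) (u : V) : lamN T wt (n + 1) u = wt u * lamN T wt n (T.par u) := by
  simp only [lamN, Finset.prod_range_succ', Function.iterate_succ_apply,
    Function.iterate_zero_apply, mul_comm]

lemma lamN_ne_zero (hwt : ∀ u, wt u ≠ 0) (n : ℕ) (u : V) : lamN T wt n u ≠ 0 :=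
  Finset.prod_ne_zero_iff.2 fun _ _ => hwt _

lemma lamRatio_eq (hwt : ∀ u, wt u ≠ 0) {w u : V} {n : ℕ}
    (h : T.par^[n] u = T.par^[n] w) :
    T.lamRatio wt w u = lamN T wt n u / lamN T wt n w := by
  classical
  have hu : u ∈ T.generation w := ⟨n, h⟩
  rw [lamRatio, dif_pos hu]
  induction n, Nat.find_min' hu h using Nat.le_induction with
  | base => rfl
  | succ k hk ih =>
    have hk' : T.par^[k] u = T.par^[k] w := iterate_par_eq_of_le (Nat.find_spec hu) hk
    rw [ih hk', lamN_succ, lamN_succ, hk', mul_div_mul_right _ _ (hwt _)]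

lemma lamRatio_of_notMem {w u : V} (h : u ∉ T.generation w) : T.lamRatio wt w u = 0 :=
  dif_neg h

lemma mul_lamRatio_par (hwt : ∀ u, wt u ≠ 0) (w u : V) :
    wt u * T.lamRatio wt (T.par w) (T.par u) = wt w * T.lamRatio wt w u := by
  by_cases hu : u ∈ T.generation w
  · obtain ⟨n, hn⟩ := hu
    have hpar : T.par^[n] (T.par u) = T.par^[n] (T.par w) := by
      rw [← Function.iterate_succ_apply, ← Function.iterate_succ_apply,
        iterate_par_eq_of_le hn n.le_succ]
    rw [lamRatio_eq hwt hpar, lamRatio_eq hwt (iterate_par_eq_of_le hn n.le_succ),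
      lamN_succ', lamN_succ']
    field_simp [hwt w, lamN_ne_zero hwt]
  · rw [lamRatio_of_notMem hu, lamRatio_of_notMem (mt mem_generation_of_par_mem hu),
      mul_zero, mul_zero]

lemma iterate_par_eq_of_mem_Aset {w u : V} {n : ℕ} (h : u ∈ Aset T w n) :
    T.par^[n] u = T.par^[n] w := by
  classical
  obtain ⟨hu, rfl⟩ := mem_Aset_iff.1 h
  exact Nat.find_spec hu

lemma alphaFun_eq_tsum (hwt : ∀ u, wt u ≠ 0) (w : V) :
    alphaFun T wt w = ∑' u, ENNReal.ofReal (T.lamRatio wt w u ^ 2) := by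
  classical
  set F : V → ℝ≥0∞ := fun u => ENNReal.ofReal (T.lamRatio wt w u ^ 2)
  have hlevel (n : ℕ) : ∑' u : Aset T w n, ENNReal.ofReal ((lamN T wt n u / lamN T wt n w) ^ 2)
      = ∑' u, (Aset T w n).indicator F u := by
    rw [← tsum_subtype]
    exact tsum_congr fun u => by simp only [F, lamRatio_eq hwt (iterate_par_eq_of_mem_Aset u.2)]
  rw [alphaFun, tsum_congr hlevel, ENNReal.tsum_comm]
  refine tsum_congr fun u => ?_
  by_cases hu : u ∈ T.generation w
  · have hdepth (n : ℕ) (hn : u ∈ Aset T w n) : n = Nat.find hu := by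
      obtain ⟨_, rfl⟩ := mem_Aset_iff.1 hn
      rfl
    rw [tsum_eq_single (Nat.find hu) fun n hn =>
        Set.indicator_of_notMem (fun hmem => hn (hdepth n hmem)) _,
      Set.indicator_of_mem (mem_Aset_iff.2 ⟨hu, rfl⟩)]
  · simp [F, lamRatio_of_notMem hu]

section Path

variable {v : ℤ → V}

lemma iterate_par_path (hpath : ∀ m, T.par (v m) = v (m - 1)) (n : ℕ) (m : ℤ) :
    T.par^[n] (v m) = v (m - n) := by
  induction n with
  | zero => simp
  | succ n ih =>
    rw [Function.iterate_succ_apply', ih, hpath]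
    congr 1
    push_cast
    ring

lemma path_injective (hpath : ∀ m, T.par (v m) = v (m - 1)) : Function.Injective v := by
  suffices h : ∀ a b, a < b → v a ≠ v b by
    intro a b hab
    by_contra hne
    rcases lt_or_gt_of_ne hne with hlt | hlt
    exacts [h a b hlt hab, h b a hlt hab.symm]
  intro a b hlt heq
  refine T.acyclic (v b) (b - a).toNat (by omega) ?_
  rw [iterate_par_path hpath, show b - ((b - a).toNat : ℤ) = a by omega, heq]

lemma exists_mem_generation_path (hpath : ∀ m, T.par (v m) = v (m - 1)) (u : V) :
    ∃ m, u ∈ T.generation (v m) := by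
  obtain ⟨k, l, hkl⟩ := T.connected u (v 0)
  refine ⟨(k : ℤ) - l, k, ?_⟩
  rw [hkl, iterate_par_path hpath, iterate_par_path hpath]
  congr 1
  ring

lemma eq_of_mem_generation_path (hpath : ∀ m, T.par (v m) = v (m - 1)) {m m' : ℤ} {u : V}
    (h : u ∈ T.generation (v m)) (h' : u ∈ T.generation (v m')) : m = m' := by
  obtain ⟨n, hn⟩ := h
  obtain ⟨n', hn'⟩ := h'
  have hv : T.par^[n + n'] (v m) = T.par^[n + n'] (v m') := by
    rw [← iterate_par_eq_of_le hn (Nat.le_add_right n n'),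
      iterate_par_eq_of_le hn' (Nat.le_add_left n' n)]
  rw [iterate_par_path hpath, iterate_par_path hpath] at hv
  have := path_injective hpath hv
  omega

end Path

variable (T) in
open scoped Classical in
/-- The paper's `g_m` is `T.lamRatioVec wt (v m)`. -/
noncomputable def lamRatioVec (wt : V → ℝ) (w : V) : lp (fun _ : V => ℂ) 2 :=
  if h : Memℓp (fun u => (T.lamRatio wt w u : ℂ)) 2 then ⟨_, h⟩ else 0

open scoped Classical in
lemma lamRatioVec_apply (w u : V) :
    T.lamRatioVec wt w u =
      if Memℓp (fun u => (T.lamRatio wt w u : ℂ)) 2 then (T.lamRatio wt w u : ℂ) else 0 := by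
  rw [lamRatioVec]
  split_ifs <;> rfl

lemma lamRatioVec_of_notMem {w u : V} (h : u ∉ T.generation w) : T.lamRatioVec wt w u = 0 := by
  simp [lamRatioVec_apply, lamRatio_of_notMem h]

lemma alphaFun_lt_top_iff (hwt : ∀ u, wt u ≠ 0) (w : V) :
    alphaFun T wt w < ⊤ ↔ Memℓp (fun u => (T.lamRatio wt w u : ℂ)) 2 := by
  rw [alphaFun_eq_tsum hwt]
  exact tsum_ofReal_sq_lt_top_iff_memℓp _

lemma lamRatioVec_apply_of_mem_Aset (hwt : ∀ u, wt u ≠ 0) {w u : V} {n : ℕ}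
    (hu : u ∈ Aset T w n) :
    T.lamRatioVec wt w u =
      if alphaFun T wt w < ⊤ then ((lamN T wt n u / lamN T wt n w : ℝ) : ℂ) else 0 := by
  classical
  rw [lamRatioVec_apply, lamRatio_eq hwt (iterate_par_eq_of_mem_Aset hu)]
  exact if_congr (alphaFun_lt_top_iff hwt w).symm rfl rfl

lemma inner_lamRatioVec_path_eq_zero {v : ℤ → V} (hpath : ∀ m, T.par (v m) = v (m - 1))
    {m m' : ℤ} (hm : m ≠ m') :
    inner ℂ (T.lamRatioVec wt (v m)) (T.lamRatioVec wt (v m')) = 0 := by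
  refine lp.inner_eq_zero_of_forall_eq_zero_or fun u => ?_
  by_cases hu : u ∈ T.generation (v m)
  · exact .inr (lamRatioVec_of_notMem fun hu' => hm (eq_of_mem_generation_path hpath hu hu'))
  · exact .inl (lamRatioVec_of_notMem hu)

variable {S : lp (fun _ : V => ℂ) 2 →L[ℂ] lp (fun _ : V => ℂ) 2}

lemma pow_apply_eq_lamN_mul (hS : ∀ f u, S f u = (wt u : ℂ) * f (T.par u)) (n : ℕ)
    (f : lp (fun _ : V => ℂ) 2) (u : V) :
    (S ^ n) f u = (lamN T wt n u : ℂ) * f (T.par^[n] u) := by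
  induction n generalizing f with
  | zero => simp [lamN]
  | succ n ih =>
    rw [pow_succ, mul_apply_eq_comp, ih, hS, lamN_succ,
      ← Function.iterate_succ_apply' T.par n u]
    push_cast
    ring

lemma memℓp_lamRatio_par_iff (hwt : ∀ u, wt u ≠ 0)
    (hS : ∀ f u, S f u = (wt u : ℂ) * f (T.par u)) {c : ℝ} (hc : 0 < c)
    (hcS : ∀ f, c * ‖f‖ ≤ ‖S f‖) (w : V) :
    Memℓp (fun u => (T.lamRatio wt (T.par w) u : ℂ)) 2 ↔
      Memℓp (fun u => (T.lamRatio wt w u : ℂ)) 2 := by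
  have hw : (wt w : ℂ) ≠ 0 := Complex.ofReal_ne_zero.2 (hwt w)
  rw [memℓp_two_iff_of_apply_eq_mul_comp hS hc hcS]
  simp_rw [← Complex.ofReal_mul, mul_lamRatio_par hwt, Complex.ofReal_mul]
  exact ⟨fun h => by simpa [hw] using h.const_mul (wt w : ℂ)⁻¹, fun h => h.const_mul _⟩

lemma shift_lamRatioVec_par (hwt : ∀ u, wt u ≠ 0)
    (hS : ∀ f u, S f u = (wt u : ℂ) * f (T.par u)) {c : ℝ} (hc : 0 < c)
    (hcS : ∀ f, c * ‖f‖ ≤ ‖S f‖) (w : V) :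
    S (T.lamRatioVec wt (T.par w)) = (wt w : ℂ) • T.lamRatioVec wt w := by
  ext u
  rw [hS, lp.coeFn_smul, Pi.smul_apply, smul_eq_mul, lamRatioVec_apply, lamRatioVec_apply,
    memℓp_lamRatio_par_iff hwt hS hc hcS]
  split_ifs
  · rw [← Complex.ofReal_mul, mul_lamRatio_par hwt, Complex.ofReal_mul]
  · simp

lemma lamRatioVec_mem_range_pow (hwt : ∀ u, wt u ≠ 0)
    (hS : ∀ f u, S f u = (wt u : ℂ) * f (T.par u)) {c : ℝ} (hc : 0 < c)
    (hcS : ∀ f, c * ‖f‖ ≤ ‖S f‖) (n : ℕ) (w : V) :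
    T.lamRatioVec wt w ∈ Set.range ⇑(S ^ n) := by
  induction n generalizing w with
  | zero => exact ⟨_, rfl⟩
  | succ n ih =>
    obtain ⟨x, hx⟩ := ih (T.par w)
    have hw : (wt w : ℂ) ≠ 0 := Complex.ofReal_ne_zero.2 (hwt w)
    refine ⟨(wt w : ℂ)⁻¹ • x, ?_⟩
    rw [pow_succ', mul_apply_eq_comp, map_smul, hx, map_smul, shift_lamRatioVec_par hwt hS hc hcS,
      smul_smul, inv_mul_cancel₀ hw, one_smul]

lemma apply_eq_mul_lamRatio_of_mem_range_pow (hwt : ∀ u, wt u ≠ 0)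
    (hS : ∀ f u, S f u = (wt u : ℂ) * f (T.par u)) {f : lp (fun _ : V => ℂ) 2}
    (hf : ∀ n : ℕ, f ∈ Set.range ⇑(S ^ n)) {w u : V} (hu : u ∈ T.generation w) :
    f u = f w * T.lamRatio wt w u := by
  obtain ⟨n, hn⟩ := hu
  obtain ⟨x, rfl⟩ := hf n
  rw [pow_apply_eq_lamN_mul hS, pow_apply_eq_lamN_mul hS, lamRatio_eq hwt hn, hn]
  have hw : (lamN T wt n w : ℂ) ≠ 0 := Complex.ofReal_ne_zero.2 (lamN_ne_zero hwt n w)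
  push_cast
  field_simp

lemma apply_eq_zero_of_mem_range_pow (hwt : ∀ u, wt u ≠ 0)
    (hS : ∀ f u, S f u = (wt u : ℂ) * f (T.par u)) {f : lp (fun _ : V => ℂ) 2}
    (hf : ∀ n : ℕ, f ∈ Set.range ⇑(S ^ n)) {w : V}
    (hw : ¬ Memℓp (fun u => (T.lamRatio wt w u : ℂ)) 2) : f w = 0 := by
  by_contra hfw
  refine hw (((lp.memℓp f).const_mul (f w)⁻¹).mono' fun u => ?_)
  by_cases hu : u ∈ T.generation w
  · rw [apply_eq_mul_lamRatio_of_mem_range_pow hwt hS hf hu, ← mul_assoc, inv_mul_cancel₀ hfw,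
      one_mul]
  · simp only [lamRatio_of_notMem hu, Complex.ofReal_zero, norm_zero]
    exact norm_nonneg _

lemma apply_eq_mul_lamRatioVec_of_mem_range_pow (hwt : ∀ u, wt u ≠ 0)
    (hS : ∀ f u, S f u = (wt u : ℂ) * f (T.par u)) {f : lp (fun _ : V => ℂ) 2}
    (hf : ∀ n : ℕ, f ∈ Set.range ⇑(S ^ n)) {w u : V} (hu : u ∈ T.generation w) :
    f u = f w * T.lamRatioVec wt w u := by
  rw [lamRatioVec_apply, apply_eq_mul_lamRatio_of_mem_range_pow hwt hS hf hu]
  split_ifs with hw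
  · rfl
  · rw [apply_eq_zero_of_mem_range_pow hwt hS hf hw, zero_mul, zero_mul]

lemma iInter_range_pow_eq_closure_span (hwt : ∀ u, wt u ≠ 0)
    (hS : ∀ f u, S f u = (wt u : ℂ) * f (T.par u)) {c : ℝ} (hc : 0 < c)
    (hcS : ∀ f, c * ‖f‖ ≤ ‖S f‖) {v : ℤ → V} (hpath : ∀ m, T.par (v m) = v (m - 1)) :
    ⋂ n : ℕ, Set.range ⇑(S ^ n) =
      closure (Submodule.span ℂ (Set.range fun m => T.lamRatioVec wt (v m)) :
        Set (lp (fun _ : V => ℂ) 2)) := by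
  apply Set.Subset.antisymm
  · intro f hf
    rw [Set.mem_iInter] at hf
    choose lev hlev using exists_mem_generation_path hpath
    refine lp.mem_closure_span_of_fiberwise lev (fun m u hum => lamRatioVec_of_notMem fun hu =>
      hum (eq_of_mem_generation_path hpath (hlev u) hu)) (fun m => f (v m)) fun u => ?_
    exact apply_eq_mul_lamRatioVec_of_mem_range_pow hwt hS hf (hlev u)
  · refine closure_minimal (Set.subset_iInter fun n => ?_)
      (isClosed_iInter (S.isClosed_range_pow_of_bound hc hcS))
    have hspan : Submodule.span ℂ (Set.range fun m => T.lamRatioVec wt (v m)) ≤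
        LinearMap.range (S ^ n).toLinearMap :=
      Submodule.span_le.2 <| Set.range_subset_iff.2 fun m =>
        lamRatioVec_mem_range_pow hwt hS hc hcS n (v m)
    exact hspan

end RootlessTree

theorem stmt16_general {V : Type*} (T : RootlessTree V)
    (wt : V → ℝ) (hwt : ∀ u : V, 0 < wt u)
    (S : lp (fun _ : V => ℂ) 2 →L[ℂ] lp (fun _ : V => ℂ) 2)
    (hS : ∀ (f : lp (fun _ : V => ℂ) 2) (v : V), (S f) v = (wt v : ℂ) * f (T.par v))
    (hleft : ∃ c : ℝ, 0 < c ∧ ∀ f : lp (fun _ : V => ℂ) 2, c * ‖f‖ ≤ ‖S f‖)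
    (v : ℤ → V) (hpath : ∀ m : ℤ, T.par (v m) = v (m - 1)) :
    ∃ g : ℤ → lp (fun _ : V => ℂ) 2,
      (∀ (m : ℤ) (n : ℕ), ∀ u ∈ Aset T (v m) n,
        (g m) u = if alphaFun T wt (v m) < ⊤ then
          ((lamN T wt n u / lamN T wt n (v m) : ℝ) : ℂ) else 0) ∧
      (∀ (m : ℤ) (u : V), (∀ n : ℕ, T.par^[n] u ≠ T.par^[n] (v m)) → (g m) u = 0) ∧
      ((⋂ n : ℕ, Set.range ⇑(S ^ n)) =
        closure (Submodule.span ℂ (Set.range g) : Set (lp (fun _ : V => ℂ) 2))) ∧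
      (∀ m m' : ℤ, m ≠ m' → (inner ℂ (g m) (g m') : ℂ) = 0) ∧
      (∀ m : ℤ, S (g m) = (wt (v (m + 1)) : ℂ) • g (m + 1)) := by
  obtain ⟨c, hc, hcS⟩ := hleft
  have hwt' (u : V) : wt u ≠ 0 := (hwt u).ne'
  refine ⟨fun m => T.lamRatioVec wt (v m),
    fun m n u hu => RootlessTree.lamRatioVec_apply_of_mem_Aset hwt' hu,
    fun m u hu => RootlessTree.lamRatioVec_of_notMem fun ⟨n, hn⟩ => hu n hn,
    RootlessTree.iInter_range_pow_eq_closure_span hwt' hS hc hcS hpath,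
    fun m m' hm => RootlessTree.inner_lamRatioVec_path_eq_zero hpath hm, fun m => ?_⟩
  simpa [hpath] using RootlessTree.shift_lamRatioVec_par hwt' hS hc hcS (v (m + 1))

/-- Structure of the hyper-range of a left-invertible weighted shift on a rootless
directed tree: the vectors `g_m` (supported on the generations of a bilateral path,
with coefficients `λ⁽ⁿ⁾(u)/λ⁽ⁿ⁾(v_m)` when `α_λ(v_m) < ∞`, and `g_m = 0` otherwise)
lie in `ℓ²(V)`, are pairwise orthogonal, span the hyper-range, and satisfy
`S_λ g_m = λ_{v_{m+1}} g_{m+1}`. -/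
theorem stmt16 {V : Type*} [Countable V] [Infinite V] (T : RootlessTree V)
    (wt : V → ℝ) (hwt : ∀ u : V, 0 < wt u)
    (S : lp (fun _ : V => ℂ) 2 →L[ℂ] lp (fun _ : V => ℂ) 2)
    (hS : ∀ (f : lp (fun _ : V => ℂ) 2) (v : V), (S f) v = (wt v : ℂ) * f (T.par v))
    (hleft : ∃ c : ℝ, 0 < c ∧ ∀ f : lp (fun _ : V => ℂ) 2, c * ‖f‖ ≤ ‖S f‖)
    (v : ℤ → V) (hpath : ∀ m : ℤ, T.par (v m) = v (m - 1)) :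
    ∃ g : ℤ → lp (fun _ : V => ℂ) 2,
      (∀ (m : ℤ) (n : ℕ), ∀ u ∈ Aset T (v m) n,
        (g m) u = if alphaFun T wt (v m) < ⊤ then
          ((lamN T wt n u / lamN T wt n (v m) : ℝ) : ℂ) else 0) ∧
      (∀ (m : ℤ) (u : V), (∀ n : ℕ, T.par^[n] u ≠ T.par^[n] (v m)) → (g m) u = 0) ∧
      ((⋂ n : ℕ, Set.range ⇑(S ^ n)) =
        closure (Submodule.span ℂ (Set.range g) : Set (lp (fun _ : V => ℂ) 2))) ∧
      (∀ m m' : ℤ, m ≠ m' → (inner ℂ (g m) (g m') : ℂ) = 0) ∧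
      (∀ m : ℤ, S (g m) = (wt (v (m + 1)) : ℂ) • g (m + 1)) :=
  stmt16_general T wt hwt S hS hleft v hpath
end

section
/- Let S_λ be a bounded left-invertible balanced weighted shift on a rootless, leafless directed tree. Then for every n ∈ ℕ: S_λ^n(ker S_λ*) = S_λ^n(ℓ²(V)) ⊖ S_λ^{n+1}(ℓ²(V)); the subspaces S_λ^n(ker S_λ*) and S_λ^m(ker S_λ*) are orthogonal for distinct m, n; and for every n ≥ 1, the orthogonal direct sum ⊕_{k=0}^{n-1} S_λ^k(ker S_λ*) equals ℓ²(V) ⊖ S_λ^n(ℓ²(V)). -/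
open scoped ENNReal

open ContinuousLinearMap

namespace Submodule

variable {𝕜 E : Type*} [RCLike 𝕜] [NormedAddCommGroup E] [InnerProductSpace 𝕜 E]

theorem inf_orthogonal_eq_of_eq_sup {K L N : Submodule 𝕜 E} (hK : K = L ⊔ N) (hN : N ≤ Lᗮ) :
    K ⊓ Lᗮ = N := by
  rw [hK, sup_comm, sup_inf_assoc_of_le L hN, inf_orthogonal_eq_bot, sup_bot_eq]

end Submodule

namespace ContinuousLinearMap

variable {𝕜 E : Type*} [RCLike 𝕜] [NormedAddCommGroup E] [InnerProductSpace 𝕜 E]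

theorem isClosed_range_of_le_norm [CompleteSpace E] (S : E →L[𝕜] E) {c : ℝ} (hc : 0 < c)
    (h : ∀ f, c * ‖f‖ ≤ ‖S f‖) :
    IsClosed (LinearMap.range (S : E →ₗ[𝕜] E) : Set E) := by
  have hanti : AntilipschitzWith (Real.toNNReal c⁻¹) S :=
    S.antilipschitz_of_bound fun f => by
      rw [Real.coe_toNNReal _ (by positivity), inv_mul_eq_div, le_div_iff₀' hc]
      exact h f
  simpa only [LinearMap.coe_range, coe_coe] using hanti.isClosed_range S.uniformContinuous

theorem range_pow_le_range_pow (S : E →L[𝕜] E) {m n : ℕ} (h : m ≤ n) :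
    LinearMap.range (↑(S ^ n) : E →ₗ[𝕜] E) ≤ LinearMap.range (↑(S ^ m) : E →ₗ[𝕜] E) := by
  rw [← Nat.add_sub_cancel' h, pow_add, toLinearMap_mul]
  exact LinearMap.range_comp_le_range _ _

theorem range_pow_eq_range_pow_succ_sup [CompleteSpace E] (S : E →L[𝕜] E)
    [(LinearMap.range (S : E →ₗ[𝕜] E)).HasOrthogonalProjection] (n : ℕ) :
    LinearMap.range (↑(S ^ n) : E →ₗ[𝕜] E) =
      LinearMap.range (↑(S ^ (n + 1)) : E →ₗ[𝕜] E) ⊔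
        Submodule.map (↑(S ^ n) : E →ₗ[𝕜] E) (LinearMap.ker (↑(adjoint S) : E →ₗ[𝕜] E)) := by
  rw [LinearMap.range_eq_map,
    ← Submodule.sup_orthogonal_of_hasOrthogonalProjection (K := LinearMap.range (S : E →ₗ[𝕜] E)),
    orthogonal_range, Submodule.map_sup, pow_succ, toLinearMap_mul, Module.End.mul_eq_comp,
    LinearMap.range_comp]

theorem inner_pow_apply_pow_succ_apply_eq_zero [CompleteSpace E] {S : E →L[𝕜] E}
    (hinv : ∀ (n : ℕ) (y : E), ∃ z, adjoint S (S ((S ^ n) y)) = (S ^ n) z)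
    {x : E} (hx : adjoint S x = 0) (n : ℕ) (y : E) :
    inner 𝕜 ((S ^ n) x) ((S ^ (n + 1)) y) = 0 := by
  induction n generalizing y with
  | zero => simp [← adjoint_inner_left, hx]
  | succ n ih =>
    obtain ⟨z, hz⟩ := hinv (n + 1) y
    rw [pow_succ' S n, mul_apply_eq_comp, pow_succ' S (n + 1),
      mul_apply_eq_comp, ← adjoint_inner_right, hz, ih]

theorem map_pow_ker_adjoint_le_orthogonal_range_pow_succ [CompleteSpace E] {S : E →L[𝕜] E}
    (hinv : ∀ (n : ℕ) (y : E), ∃ z, adjoint S (S ((S ^ n) y)) = (S ^ n) z) (n : ℕ) :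
    Submodule.map (↑(S ^ n) : E →ₗ[𝕜] E) (LinearMap.ker (↑(adjoint S) : E →ₗ[𝕜] E)) ≤
      (LinearMap.range (↑(S ^ (n + 1)) : E →ₗ[𝕜] E))ᗮ := by
  rintro _ ⟨x, hx, rfl⟩
  rw [Submodule.mem_orthogonal']
  rintro _ ⟨y, rfl⟩
  exact inner_pow_apply_pow_succ_apply_eq_zero hinv hx n y

theorem map_pow_ker_adjoint_eq_range_pow_inf_orthogonal [CompleteSpace E] {S : E →L[𝕜] E}
    [(LinearMap.range (S : E →ₗ[𝕜] E)).HasOrthogonalProjection]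
    (hinv : ∀ (n : ℕ) (y : E), ∃ z, adjoint S (S ((S ^ n) y)) = (S ^ n) z) (n : ℕ) :
    Submodule.map (↑(S ^ n) : E →ₗ[𝕜] E) (LinearMap.ker (↑(adjoint S) : E →ₗ[𝕜] E)) =
      LinearMap.range (↑(S ^ n) : E →ₗ[𝕜] E) ⊓
        (LinearMap.range (↑(S ^ (n + 1)) : E →ₗ[𝕜] E))ᗮ :=
  (Submodule.inf_orthogonal_eq_of_eq_sup (range_pow_eq_range_pow_succ_sup S n)
    (map_pow_ker_adjoint_le_orthogonal_range_pow_succ hinv n)).symm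

theorem inner_eq_zero_of_mem_map_pow_ker_adjoint [CompleteSpace E] {S : E →L[𝕜] E}
    (hinv : ∀ (n : ℕ) (y : E), ∃ z, adjoint S (S ((S ^ n) y)) = (S ^ n) z) {m n : ℕ}
    (hmn : m ≠ n) {x y : E}
    (hx : x ∈ Submodule.map (↑(S ^ m) : E →ₗ[𝕜] E) (LinearMap.ker (↑(adjoint S) : E →ₗ[𝕜] E)))
    (hy : y ∈ Submodule.map (↑(S ^ n) : E →ₗ[𝕜] E) (LinearMap.ker (↑(adjoint S) : E →ₗ[𝕜] E))) :
    inner 𝕜 x y = 0 := by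
  wlog h : m < n generalizing m n x y
  · exact inner_eq_zero_symm.mp (this hmn.symm hy hx (by omega))
  obtain ⟨b, -, rfl⟩ := hy
  exact Submodule.inner_left_of_mem_orthogonal (range_pow_le_range_pow S h ⟨b, rfl⟩)
    (map_pow_ker_adjoint_le_orthogonal_range_pow_succ hinv m hx)

theorem range_pow_sup_iSup_map_pow_ker_adjoint [CompleteSpace E] (S : E →L[𝕜] E)
    [(LinearMap.range (S : E →ₗ[𝕜] E)).HasOrthogonalProjection] (n : ℕ) :
    LinearMap.range (↑(S ^ n) : E →ₗ[𝕜] E) ⊔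
      (⨆ k ∈ Finset.range n,
        Submodule.map (↑(S ^ k) : E →ₗ[𝕜] E) (LinearMap.ker (↑(adjoint S) : E →ₗ[𝕜] E))) = ⊤ := by
  induction n with
  | zero => simp [Module.End.one_eq_id]
  | succ n ih =>
    rw [Finset.range_add_one, Finset.iSup_insert, ← sup_assoc,
      ← range_pow_eq_range_pow_succ_sup, ih]

theorem iSup_map_pow_ker_adjoint_eq_orthogonal_range_pow [CompleteSpace E] {S : E →L[𝕜] E}
    [(LinearMap.range (S : E →ₗ[𝕜] E)).HasOrthogonalProjection]
    (hinv : ∀ (n : ℕ) (y : E), ∃ z, adjoint S (S ((S ^ n) y)) = (S ^ n) z) (n : ℕ) :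
    (⨆ k ∈ Finset.range n,
        Submodule.map (↑(S ^ k) : E →ₗ[𝕜] E) (LinearMap.ker (↑(adjoint S) : E →ₗ[𝕜] E))) =
      (LinearMap.range (↑(S ^ n) : E →ₗ[𝕜] E))ᗮ := by
  refine (Submodule.inf_orthogonal_eq_of_eq_sup
    (range_pow_sup_iSup_map_pow_ker_adjoint S n).symm (iSup₂_le fun k hk => ?_)).symm.trans
    (top_inf_eq _)
  exact (map_pow_ker_adjoint_le_orthogonal_range_pow_succ hinv k).trans
    (Submodule.orthogonal_le (range_pow_le_range_pow S (Finset.mem_range.mp hk)))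

end ContinuousLinearMap

theorem lp.exists_apply_eq_mul {V : Type*} {p : ℝ≥0∞} (φ : V → ℂ) {C : ℝ} (hφ : ∀ v, ‖φ v‖ ≤ C)
    (f : lp (fun _ : V => ℂ) p) : ∃ g : lp (fun _ : V => ℂ) p, ∀ v, g v = φ v * f v :=
  ⟨⟨fun v => φ v * f v, ((lp.memℓp f).norm.const_mul C).mono fun v => by
    rw [norm_mul]; exact mul_le_mul_of_nonneg_right (hφ v) (norm_nonneg _)⟩, fun _ => rfl⟩

namespace RootlessTree

variable {V : Type*} (T : RootlessTree V)

local notation "ℓ²" => lp (fun _ : V => ℂ) 2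

theorem exists_weightedShift_pow_apply_eq_mul {wt : V → ℝ} {S : ℓ² →L[ℂ] ℓ²}
    (hS : ∀ (f : ℓ²) (v : V), S f v = (wt v : ℂ) * f (T.par v)) (n : ℕ) (φ : V → ℂ) {C : ℝ}
    (hφ : ∀ v, ‖φ v‖ ≤ C) (hgen : ∀ u u' : V, (∃ k : ℕ, T.par^[k] u = T.par^[k] u') → φ u = φ u')
    (y : ℓ²) : ∃ z : ℓ², ∀ v, (S ^ n) z v = φ v * (S ^ n) y v := by
  induction n generalizing φ with
  | zero => simpa using lp.exists_apply_eq_mul φ hφ y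
  | succ n ih =>
    choose child hchild using T.leafless
    have hgen_child : ∀ u u' : V, (∃ k : ℕ, T.par^[k] u = T.par^[k] u') →
        φ (child u) = φ (child u') := by
      rintro u u' ⟨k, hk⟩
      exact hgen _ _ ⟨k + 1, by simp only [Function.iterate_succ_apply, hchild, hk]⟩
    obtain ⟨z, hz⟩ := ih (φ ∘ child) (fun v => hφ _) hgen_child
    refine ⟨z, fun v => ?_⟩
    have hsib : φ (child (T.par v)) = φ v := hgen _ _ ⟨1, by simp [hchild]⟩
    simp only [pow_succ', mul_apply_eq_comp, hS, hz, Function.comp_apply, hsib]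
    ring

variable [DecidableEq V]

theorem adjoint_weightedShift_apply_apply {wt : V → ℝ} {S : ℓ² →L[ℂ] ℓ²}
    (hS : ∀ (f : ℓ²) (v : V), S f v = (wt v : ℂ) * f (T.par v)) (g : ℓ²) (u : V) :
    adjoint S (S g) u = (‖S (lp.single 2 u 1)‖ : ℂ) ^ 2 * g u := by
  -- `S e_u` is supported on the children of `u`, where `S g = g u • S e_u`.
  have hpoint : ∀ v, inner ℂ (S (lp.single 2 u 1) v) (S g v) =
      g u * inner ℂ (S (lp.single 2 u 1) v) (S (lp.single 2 u 1) v) := by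
    intro v
    by_cases hv : T.par v = u
    · simp only [hS, hv, lp.single_apply_self, RCLike.inner_apply]
      ring
    · simp [hS, lp.single_apply, Ne.symm hv]
  calc adjoint S (S g) u = inner ℂ (S (lp.single 2 u 1)) (S g) := by
        rw [← adjoint_inner_right, lp.inner_single_left, RCLike.inner_apply, map_one, mul_one]
    _ = g u * inner ℂ (S (lp.single 2 u 1)) (S (lp.single 2 u 1)) := by
        rw [lp.inner_eq_tsum, lp.inner_eq_tsum, ← tsum_mul_left]
        exact tsum_congr hpoint
    _ = _ := by rw [inner_self_eq_norm_sq_to_K, mul_comm]; norm_cast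

theorem exists_adjoint_weightedShift_pow_eq {wt : V → ℝ} {S : ℓ² →L[ℂ] ℓ²}
    (hS : ∀ (f : ℓ²) (v : V), S f v = (wt v : ℂ) * f (T.par v))
    (hbal : ∀ u u' : V, (∃ n : ℕ, T.par^[n] u = T.par^[n] u') →
      ‖S (lp.single 2 u (1 : ℂ))‖ = ‖S (lp.single 2 u' (1 : ℂ))‖) (n : ℕ) (y : ℓ²) :
    ∃ z, adjoint S (S ((S ^ n) y)) = (S ^ n) z := by
  have hbound : ∀ u, ‖(‖S (lp.single 2 u 1)‖ : ℂ) ^ 2‖ ≤ ‖S‖ ^ 2 := fun u => by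
    rw [norm_pow, Complex.norm_real, norm_norm]
    exact pow_le_pow_left₀ (norm_nonneg _) (S.unit_le_opNorm _ (by simp)) 2
  obtain ⟨z, hz⟩ := T.exists_weightedShift_pow_apply_eq_mul hS n _ hbound
    (fun u u' h => by rw [hbal u u' h]) y
  exact ⟨z, lp.ext (funext fun u => by rw [T.adjoint_weightedShift_apply_apply hS, hz])⟩

end RootlessTree

theorem stmt18_general {V : Type*} [DecidableEq V] (T : RootlessTree V)
    (wt : V → ℝ)
    (S : lp (fun _ : V => ℂ) 2 →L[ℂ] lp (fun _ : V => ℂ) 2)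
    (hS : ∀ (f : lp (fun _ : V => ℂ) 2) (v : V), (S f) v = (wt v : ℂ) * f (T.par v))
    (hleft : ∃ c : ℝ, 0 < c ∧ ∀ f : lp (fun _ : V => ℂ) 2, c * ‖f‖ ≤ ‖S f‖)
    (hbal : ∀ u u' : V, (∃ n : ℕ, T.par^[n] u = T.par^[n] u') →
      ‖S (lp.single 2 u (1 : ℂ))‖ = ‖S (lp.single 2 u' (1 : ℂ))‖) :
    (∀ n : ℕ, Submodule.map (↑(S ^ n) : lp (fun _ : V => ℂ) 2 →ₗ[ℂ] lp (fun _ : V => ℂ) 2)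
          (LinearMap.ker (↑(adjoint S) : lp (fun _ : V => ℂ) 2 →ₗ[ℂ] lp (fun _ : V => ℂ) 2)) =
        LinearMap.range (↑(S ^ n) : lp (fun _ : V => ℂ) 2 →ₗ[ℂ] lp (fun _ : V => ℂ) 2) ⊓
          (LinearMap.range (↑(S ^ (n + 1)) : lp (fun _ : V => ℂ) 2 →ₗ[ℂ] lp (fun _ : V => ℂ) 2))ᗮ) ∧
      (∀ m n : ℕ, m ≠ n →
        ∀ x ∈ Submodule.map (↑(S ^ m) : lp (fun _ : V => ℂ) 2 →ₗ[ℂ] lp (fun _ : V => ℂ) 2)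
            (LinearMap.ker (↑(adjoint S) : lp (fun _ : V => ℂ) 2 →ₗ[ℂ] lp (fun _ : V => ℂ) 2)),
          ∀ y ∈ Submodule.map (↑(S ^ n) : lp (fun _ : V => ℂ) 2 →ₗ[ℂ] lp (fun _ : V => ℂ) 2)
            (LinearMap.ker (↑(adjoint S) : lp (fun _ : V => ℂ) 2 →ₗ[ℂ] lp (fun _ : V => ℂ) 2)),
            (inner ℂ x y : ℂ) = 0) ∧
      (∀ n : ℕ, 1 ≤ n →
        (⨆ k ∈ Finset.range n, Submodule.map (↑(S ^ k) : lp (fun _ : V => ℂ) 2 →ₗ[ℂ] lp (fun _ : V => ℂ) 2)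
            (LinearMap.ker (↑(adjoint S) : lp (fun _ : V => ℂ) 2 →ₗ[ℂ] lp (fun _ : V => ℂ) 2))) =
          (LinearMap.range (↑(S ^ n) : lp (fun _ : V => ℂ) 2 →ₗ[ℂ] lp (fun _ : V => ℂ) 2))ᗮ) := by
  obtain ⟨c, hc, hlow⟩ := hleft
  have hinv := T.exists_adjoint_weightedShift_pow_eq hS hbal
  have : CompleteSpace (LinearMap.range (S : lp (fun _ : V => ℂ) 2 →ₗ[ℂ] lp (fun _ : V => ℂ) 2)) :=
    (S.isClosed_range_of_le_norm hc hlow).completeSpace_coe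
  exact ⟨map_pow_ker_adjoint_eq_range_pow_inf_orthogonal hinv,
    fun m n hmn x hx y hy => inner_eq_zero_of_mem_map_pow_ker_adjoint hinv hmn hx hy,
    fun n _ => iSup_map_pow_ker_adjoint_eq_orthogonal_range_pow hinv n⟩

/-- For a bounded left-invertible balanced weighted shift `S_λ`:
`S_λⁿ(ker S_λ*) = S_λⁿ(ℓ²(V)) ⊖ S_λⁿ⁺¹(ℓ²(V))`, the subspaces `S_λⁿ(ker S_λ*)` are
pairwise orthogonal, and `⊕_{k<n} S_λᵏ(ker S_λ*) = ℓ²(V) ⊖ S_λⁿ(ℓ²(V))` for `n ≥ 1`. -/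
theorem stmt18 {V : Type*} [Countable V] [Infinite V] [DecidableEq V] (T : RootlessTree V)
    (wt : V → ℝ) (hwt : ∀ u : V, 0 < wt u)
    (S : lp (fun _ : V => ℂ) 2 →L[ℂ] lp (fun _ : V => ℂ) 2)
    (hS : ∀ (f : lp (fun _ : V => ℂ) 2) (v : V), (S f) v = (wt v : ℂ) * f (T.par v))
    (hleft : ∃ c : ℝ, 0 < c ∧ ∀ f : lp (fun _ : V => ℂ) 2, c * ‖f‖ ≤ ‖S f‖)
    (hbal : ∀ u u' : V, (∃ n : ℕ, T.par^[n] u = T.par^[n] u') →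
      ‖S (lp.single 2 u (1 : ℂ))‖ = ‖S (lp.single 2 u' (1 : ℂ))‖) :
    (∀ n : ℕ, Submodule.map (↑(S ^ n) : lp (fun _ : V => ℂ) 2 →ₗ[ℂ] lp (fun _ : V => ℂ) 2)
          (LinearMap.ker (↑(adjoint S) : lp (fun _ : V => ℂ) 2 →ₗ[ℂ] lp (fun _ : V => ℂ) 2)) =
        LinearMap.range (↑(S ^ n) : lp (fun _ : V => ℂ) 2 →ₗ[ℂ] lp (fun _ : V => ℂ) 2) ⊓
          (LinearMap.range (↑(S ^ (n + 1)) : lp (fun _ : V => ℂ) 2 →ₗ[ℂ] lp (fun _ : V => ℂ) 2))ᗮ) ∧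
      (∀ m n : ℕ, m ≠ n →
        ∀ x ∈ Submodule.map (↑(S ^ m) : lp (fun _ : V => ℂ) 2 →ₗ[ℂ] lp (fun _ : V => ℂ) 2)
            (LinearMap.ker (↑(adjoint S) : lp (fun _ : V => ℂ) 2 →ₗ[ℂ] lp (fun _ : V => ℂ) 2)),
          ∀ y ∈ Submodule.map (↑(S ^ n) : lp (fun _ : V => ℂ) 2 →ₗ[ℂ] lp (fun _ : V => ℂ) 2)
            (LinearMap.ker (↑(adjoint S) : lp (fun _ : V => ℂ) 2 →ₗ[ℂ] lp (fun _ : V => ℂ) 2)),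
            (inner ℂ x y : ℂ) = 0) ∧
      (∀ n : ℕ, 1 ≤ n →
        (⨆ k ∈ Finset.range n, Submodule.map (↑(S ^ k) : lp (fun _ : V => ℂ) 2 →ₗ[ℂ] lp (fun _ : V => ℂ) 2)
            (LinearMap.ker (↑(adjoint S) : lp (fun _ : V => ℂ) 2 →ₗ[ℂ] lp (fun _ : V => ℂ) 2))) =
          (LinearMap.range (↑(S ^ n) : lp (fun _ : V => ℂ) 2 →ₗ[ℂ] lp (fun _ : V => ℂ) 2))ᗮ) :=
  stmt18_general T wt S hS hleft hbal
end

section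
/- Let S_λ be a bounded left-invertible, non-analytic, balanced weighted shift on a rootless, leafless directed tree. Then ℓ²(V) decomposes as the orthogonal direct sum of the hyper-range S_λ^∞(ℓ²(V)) and the subspaces S_λ^n(ker S_λ*) for n ∈ ℕ: ℓ²(V) = S_λ^∞(ℓ²(V)) ⊕ ker S_λ* ⊕ S_λ(ker S_λ*) ⊕ S_λ²(ker S_λ*) ⊕ ⋯. -/
open scoped ENNReal

open ContinuousLinearMap
open scoped InnerProductSpace

/-!
For a balanced weighted shift, `S† S` is diagonal with entries `‖S e_v‖²`, which are constant on
generations. Hence `S† S^(k+1) w = S^k w'` where `w'` is `w` multiplied by these entries taken `k`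
generations further down, and `w'` stays in `ker S†` because the multiplier is constant on
siblings. Induction on `k` gives `S^k (ker S†) ⊥ range S^(k+1)`, which yields every orthogonality
relation. As `S` is bounded below, its range is closed and `ℓ² = ker S† ⊕ range S`; so a vector
orthogonal to all of `S^n (ker S†)` lies, by induction, in every `range S^n`, i.e. in the
hyper-range, to which it is also orthogonal.
-/

theorem ContinuousLinearMap.isClosed_range_of_mul_norm_le {𝕜 E F : Type*}
    [NontriviallyNormedField 𝕜] [NormedAddCommGroup E] [NormedSpace 𝕜 E] [CompleteSpace E]
    [NormedAddCommGroup F] [NormedSpace 𝕜 F] (f : E →L[𝕜] F) {c : ℝ} (hc : 0 < c)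
    (h : ∀ x, c * ‖x‖ ≤ ‖f x‖) :
    IsClosed (LinearMap.range f.toLinearMap : Set F) := by
  refine (f.antilipschitz_of_bound (K := (c⁻¹).toNNReal) fun x => ?_).isClosed_range
    f.uniformContinuous
  rw [Real.coe_toNNReal _ (inv_nonneg.mpr hc.le), inv_mul_eq_div, le_div_iff₀ hc, mul_comm]
  exact h x

section Wold

variable {𝕜 E : Type*} [RCLike 𝕜] [NormedAddCommGroup E] [InnerProductSpace 𝕜 E] [CompleteSpace E]
  {S : E →L[𝕜] E}

variable (S) in
def PowKerAdjointOrthoRangePowSucc : Prop :=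
  ∀ (k : ℕ) (w : E), adjoint S w = 0 → ∀ z, ⟪(S ^ (k + 1)) z, (S ^ k) w⟫_𝕜 = 0

theorem powKerAdjointOrthoRangePowSucc_of_forall_exists
    (hinv : ∀ (k : ℕ) (w : E), adjoint S w = 0 →
      ∃ w', adjoint S w' = 0 ∧ adjoint S ((S ^ (k + 1)) w) = (S ^ k) w') :
    PowKerAdjointOrthoRangePowSucc S := by
  intro k w hw z
  induction k generalizing w with
  | zero => simp [← adjoint_inner_right, hw]
  | succ k ih =>
    obtain ⟨w', hw', hSw⟩ := hinv k w hw
    rw [pow_succ' S (k + 1), mul_apply_eq_comp, ← adjoint_inner_right, hSw]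
    exact ih w' hw'

theorem inner_eq_zero_of_mem_iInf_range_pow_of_mem_map_ker_adjoint
    (horth : PowKerAdjointOrthoRangePowSucc S)
    {n : ℕ} {x y : E} (hx : x ∈ ⨅ k : ℕ, LinearMap.range (S ^ k).toLinearMap)
    (hy : y ∈ Submodule.map (S ^ n).toLinearMap (LinearMap.ker (adjoint S).toLinearMap)) :
    ⟪x, y⟫_𝕜 = 0 := by
  obtain ⟨z, rfl⟩ := (Submodule.mem_iInf _).mp hx (n + 1)
  obtain ⟨w, hw, rfl⟩ := hy
  exact horth n w hw z

theorem inner_eq_zero_of_mem_map_ker_adjoint_of_lt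
    (horth : PowKerAdjointOrthoRangePowSucc S)
    {m n : ℕ} (hmn : m < n) {x y : E}
    (hx : x ∈ Submodule.map (S ^ m).toLinearMap (LinearMap.ker (adjoint S).toLinearMap))
    (hy : y ∈ Submodule.map (S ^ n).toLinearMap (LinearMap.ker (adjoint S).toLinearMap)) :
    ⟪x, y⟫_𝕜 = 0 := by
  obtain ⟨w, hw, rfl⟩ := hx
  obtain ⟨z, -, rfl⟩ := hy
  obtain ⟨d, rfl⟩ := Nat.exists_eq_add_of_lt hmn
  rw [inner_eq_zero_symm, add_right_comm, pow_add]
  exact horth m w hw ((S ^ d) z)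

theorem sup_ker_adjoint_range_eq_top (hrange : IsClosed (LinearMap.range S.toLinearMap : Set E)) :
    LinearMap.ker (adjoint S).toLinearMap ⊔ LinearMap.range S.toLinearMap = ⊤ := by
  have : CompleteSpace (LinearMap.range S.toLinearMap) := hrange.completeSpace_coe
  rw [sup_comm, ← S.orthogonal_range]
  exact Submodule.sup_orthogonal_of_hasOrthogonalProjection

theorem mem_range_pow_succ_of_orthogonal
    (horth : PowKerAdjointOrthoRangePowSucc S)
    (hrange : IsClosed (LinearMap.range S.toLinearMap : Set E)) {n : ℕ} {x : E}
    (hx : x ∈ LinearMap.range (S ^ n).toLinearMap)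
    (hxperp : ∀ y ∈ Submodule.map (S ^ n).toLinearMap (LinearMap.ker (adjoint S).toLinearMap),
      ⟪y, x⟫_𝕜 = 0) :
    x ∈ LinearMap.range (S ^ (n + 1)).toLinearMap := by
  obtain ⟨z, rfl⟩ := hx
  obtain ⟨e, he, _, ⟨u, rfl⟩, rfl⟩ :=
    Submodule.mem_sup.mp ((sup_ker_adjoint_range_eq_top hrange).ge (Submodule.mem_top (x := z)))
  have hdecomp : (S ^ n) (e + S u) = (S ^ n) e + (S ^ (n + 1)) u := by
    rw [map_add, pow_succ, mul_apply_eq_comp]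
  have hcross : ⟪(S ^ n) e, (S ^ (n + 1)) u⟫_𝕜 = 0 :=
    (inner_eq_zero_symm (𝕜 := 𝕜)).mp (horth n e he u)
  have hzero : (S ^ n) e = 0 := by
    have hperp : ⟪(S ^ n) e, (S ^ n) (e + S u)⟫_𝕜 = 0 := hxperp _ ⟨e, he, rfl⟩
    rwa [hdecomp, inner_add_right, hcross, add_zero, inner_self_eq_zero] at hperp
  refine ⟨u, ?_⟩
  change (S ^ (n + 1)) u = (S ^ n) (e + S u)
  rw [hdecomp, hzero, zero_add]

theorem topologicalClosure_iInf_range_pow_sup_iSup_map_ker_adjoint_eq_top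
    (horth : PowKerAdjointOrthoRangePowSucc S)
    (hrange : IsClosed (LinearMap.range S.toLinearMap : Set E)) :
    ((⨅ k : ℕ, LinearMap.range (S ^ k).toLinearMap) ⊔
      ⨆ n : ℕ, Submodule.map (S ^ n).toLinearMap
        (LinearMap.ker (adjoint S).toLinearMap)).topologicalClosure = ⊤ := by
  rw [Submodule.topologicalClosure_eq_top_iff, Submodule.eq_bot_iff]
  intro x hx
  have hxperp := (Submodule.mem_orthogonal _ x).mp hx
  have hrange : ∀ n : ℕ, x ∈ LinearMap.range (S ^ n).toLinearMap := by
    intro n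
    induction n with
    | zero => exact ⟨x, by simp⟩
    | succ n ih =>
      exact mem_range_pow_succ_of_orthogonal horth hrange ih fun y hy =>
        hxperp y (Submodule.mem_sup_right (Submodule.mem_iSup_of_mem n hy))
  exact inner_self_eq_zero.mp
    (hxperp x (Submodule.mem_sup_left (Submodule.mem_iInf _ |>.mpr hrange)))

end Wold

namespace RootlessTree

variable {V : Type*} (T : RootlessTree V)

noncomputable def child (u : V) : V := (T.leafless u).choose

theorem par_child (u : V) : T.par (T.child u) = u := (T.leafless u).choose_spec

theorem par_iterate_child_iterate (k : ℕ) (u : V) : T.par^[k] (T.child^[k] u) = u := by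
  induction k with
  | zero => rfl
  | succ k ih =>
    rw [Function.iterate_succ_apply' T.child, Function.iterate_succ_apply, par_child, ih]

end RootlessTree

theorem lamN_succ {V : Type*} (T : RootlessTree V) (wt : V → ℝ) (n : ℕ) (v : V) :
    lamN T wt (n + 1) v = wt v * lamN T wt n (T.par v) := by
  simp only [lamN, Finset.prod_range_succ', Function.iterate_succ_apply,
    Function.iterate_zero_apply, mul_comm]

theorem lp.adjoint_apply_eq_inner_single {ι 𝕜 : Type*} [RCLike 𝕜] [DecidableEq ι]
    (A : lp (fun _ : ι => 𝕜) 2 →L[𝕜] lp (fun _ : ι => 𝕜) 2) (g : lp (fun _ : ι => 𝕜) 2) (i : ι) :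
    adjoint A g i = ⟪A (lp.single 2 i 1), g⟫_𝕜 := by
  rw [← adjoint_inner_right, lp.inner_single_left]
  simp [RCLike.inner_apply]

theorem lp.inner_eq_tsum_conj_mul {ι 𝕜 : Type*} [RCLike 𝕜] (f g : lp (fun _ : ι => 𝕜) 2) :
    ⟪f, g⟫_𝕜 = ∑' i, starRingEnd 𝕜 (f i) * g i := by
  simp only [lp.inner_eq_tsum, RCLike.inner_apply, mul_comm]

def IsWeightedShift {V : Type*} (T : RootlessTree V) (wt : V → ℝ)
    (S : lp (fun _ : V => ℂ) 2 →L[ℂ] lp (fun _ : V => ℂ) 2) : Prop :=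
  ∀ (f : lp (fun _ : V => ℂ) 2) (v : V), S f v = wt v * f (T.par v)

namespace IsWeightedShift

variable {V : Type*} {T : RootlessTree V} {wt : V → ℝ}
  {S : lp (fun _ : V => ℂ) 2 →L[ℂ] lp (fun _ : V => ℂ) 2}

theorem pow_apply (hS : IsWeightedShift T wt S) (n : ℕ) (f : lp (fun _ : V => ℂ) 2) (v : V) :
    (S ^ n) f v = lamN T wt n v * f (T.par^[n] v) := by
  induction n generalizing v with
  | zero => simp [lamN]
  | succ n ih =>
    rw [pow_succ', mul_apply_eq_comp, hS, ih, lamN_succ, Function.iterate_succ_apply]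
    push_cast
    ring

variable [DecidableEq V]

theorem adjoint_apply (hS : IsWeightedShift T wt S) (g : lp (fun _ : V => ℂ) 2) (v : V) :
    adjoint S g v = ∑' x, if T.par x = v then (wt x : ℂ) * g x else 0 := by
  rw [lp.adjoint_apply_eq_inner_single, lp.inner_eq_tsum_conj_mul]
  refine tsum_congr fun x => ?_
  rw [hS, lp.single_apply, Pi.single_apply]
  split_ifs <;> simp

theorem adjoint_apply_apply (hS : IsWeightedShift T wt S) (f : lp (fun _ : V => ℂ) 2) (v : V) :
    adjoint S (S f) v = ‖S (lp.single 2 v 1)‖ ^ 2 * f v := by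
  have hnorm : (‖S (lp.single 2 v 1)‖ : ℂ) ^ 2 = ⟪S (lp.single 2 v 1), S (lp.single 2 v 1)⟫_ℂ := by
    rw [inner_self_eq_norm_sq_to_K]; rfl
  rw [lp.adjoint_apply_eq_inner_single, hnorm, mul_comm,
    lp.inner_eq_tsum_conj_mul, lp.inner_eq_tsum_conj_mul, ← tsum_mul_left]
  refine tsum_congr fun x => ?_
  rw [hS, hS, lp.single_apply, Pi.single_apply]
  split_ifs with h
  · rw [h]; ring
  · simp

theorem exists_adjoint_pow_succ_apply_eq_pow_apply (hS : IsWeightedShift T wt S)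
    (hbal : ∀ u u' : V, (∃ n : ℕ, T.par^[n] u = T.par^[n] u') →
      ‖S (lp.single 2 u (1 : ℂ))‖ = ‖S (lp.single 2 u' (1 : ℂ))‖)
    (k : ℕ) {w : lp (fun _ : V => ℂ) 2} (hw : adjoint S w = 0) :
    ∃ w', adjoint S w' = 0 ∧ adjoint S ((S ^ (k + 1)) w) = (S ^ k) w' := by
  set γ : V → ℝ := fun x => ‖S (lp.single 2 (T.child^[k] x) 1)‖ ^ 2
  have hγ_le : ∀ x, ‖(γ x : ℂ) * w x‖ ≤ ‖S‖ ^ 2 * ‖w x‖ := by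
    intro x
    have : ‖S (lp.single 2 (T.child^[k] x) 1)‖ ≤ ‖S‖ :=
      S.unit_le_opNorm _ (by rw [lp.norm_single (by norm_num), norm_one])
    rw [norm_mul, Complex.norm_real, Real.norm_of_nonneg (by positivity)]
    gcongr
    exact pow_le_pow_left₀ (norm_nonneg _) this 2
  let w' : lp (fun _ : V => ℂ) 2 :=
    ⟨fun x => γ x * w x, ((lp.memℓp w).norm.const_mul _).mono hγ_le⟩
  have hγ_siblings : ∀ x, γ x = γ (T.child (T.par x)) := by
    intro x
    refine congrArg (· ^ 2) (hbal _ _ ⟨k + 1, ?_⟩)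
    rw [Function.iterate_succ_apply', Function.iterate_succ_apply',
      T.par_iterate_child_iterate, T.par_iterate_child_iterate, T.par_child]
  have hγ_generation : ∀ v, γ (T.par^[k] v) = ‖S (lp.single 2 v 1)‖ ^ 2 :=
    fun v => congrArg (· ^ 2) (hbal _ _ ⟨k, T.par_iterate_child_iterate k _⟩)
  refine ⟨w', ?_, ?_⟩
  · ext v
    have hsum : adjoint S w' v = γ (T.child v) * adjoint S w v := by
      rw [hS.adjoint_apply, hS.adjoint_apply, ← tsum_mul_left]
      refine tsum_congr fun x => ?_
      split_ifs with h
      · change _ * ((γ x : ℂ) * w x) = _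
        rw [hγ_siblings, h]
        ring
      · rw [mul_zero]
    rw [hsum, hw]
    simp
  · ext v
    rw [pow_succ', mul_apply_eq_comp, hS.adjoint_apply_apply, hS.pow_apply, hS.pow_apply]
    change _ = _ * ((γ (T.par^[k] v) : ℂ) * w (T.par^[k] v))
    rw [hγ_generation]
    push_cast
    ring

end IsWeightedShift

theorem stmt19_general {V : Type*} [DecidableEq V] (T : RootlessTree V)
    (wt : V → ℝ)
    (S : lp (fun _ : V => ℂ) 2 →L[ℂ] lp (fun _ : V => ℂ) 2)
    (hS : ∀ (f : lp (fun _ : V => ℂ) 2) (v : V), (S f) v = (wt v : ℂ) * f (T.par v))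
    (hleft : ∃ c : ℝ, 0 < c ∧ ∀ f : lp (fun _ : V => ℂ) 2, c * ‖f‖ ≤ ‖S f‖)
    (hbal : ∀ u u' : V, (∃ n : ℕ, T.par^[n] u = T.par^[n] u') →
      ‖S (lp.single 2 u (1 : ℂ))‖ = ‖S (lp.single 2 u' (1 : ℂ))‖) :
    (∀ n : ℕ, ∀ x ∈ ⨅ k : ℕ, LinearMap.range (S ^ k).toLinearMap,
        ∀ y ∈ Submodule.map (S ^ n).toLinearMap (LinearMap.ker (adjoint S).toLinearMap), (inner ℂ x y : ℂ) = 0) ∧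
      (∀ m n : ℕ, m ≠ n →
        ∀ x ∈ Submodule.map (S ^ m).toLinearMap (LinearMap.ker (adjoint S).toLinearMap),
          ∀ y ∈ Submodule.map (S ^ n).toLinearMap (LinearMap.ker (adjoint S).toLinearMap),
            (inner ℂ x y : ℂ) = 0) ∧
      ((⨅ k : ℕ, LinearMap.range (S ^ k).toLinearMap) ⊔
          (⨆ n : ℕ, Submodule.map (S ^ n).toLinearMap (LinearMap.ker (adjoint S).toLinearMap))).topologicalClosure
        = ⊤ := by
  have horth : PowKerAdjointOrthoRangePowSucc S :=
    powKerAdjointOrthoRangePowSucc_of_forall_exists fun k _ hw =>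
      IsWeightedShift.exists_adjoint_pow_succ_apply_eq_pow_apply hS hbal k hw
  obtain ⟨c, hc, hc_le⟩ := hleft
  refine ⟨fun _ _ hx _ hy => inner_eq_zero_of_mem_iInf_range_pow_of_mem_map_ker_adjoint horth hx hy,
    fun m n hmn x hx y hy => ?_,
    topologicalClosure_iInf_range_pow_sup_iSup_map_ker_adjoint_eq_top horth
      (S.isClosed_range_of_mul_norm_le hc hc_le)⟩
  rcases hmn.lt_or_gt with h | h
  · exact inner_eq_zero_of_mem_map_ker_adjoint_of_lt horth h hx hy
  · exact (inner_eq_zero_symm (𝕜 := ℂ)).mp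
      (inner_eq_zero_of_mem_map_ker_adjoint_of_lt horth h hy hx)

/-- Wold-type decomposition for a bounded left-invertible, non-analytic, balanced
weighted shift: `ℓ²(V)` is the orthogonal direct sum of the hyper-range
`S_λ^∞(ℓ²(V))` and the subspaces `S_λⁿ(ker S_λ*)`, `n ∈ ℕ`. -/
theorem stmt19 {V : Type*} [Countable V] [Infinite V] [DecidableEq V] (T : RootlessTree V)
    (wt : V → ℝ) (hwt : ∀ u : V, 0 < wt u)
    (S : lp (fun _ : V => ℂ) 2 →L[ℂ] lp (fun _ : V => ℂ) 2)
    (hS : ∀ (f : lp (fun _ : V => ℂ) 2) (v : V), (S f) v = (wt v : ℂ) * f (T.par v))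
    (hleft : ∃ c : ℝ, 0 < c ∧ ∀ f : lp (fun _ : V => ℂ) 2, c * ‖f‖ ≤ ‖S f‖)
    (hbal : ∀ u u' : V, (∃ n : ℕ, T.par^[n] u = T.par^[n] u') →
      ‖S (lp.single 2 u (1 : ℂ))‖ = ‖S (lp.single 2 u' (1 : ℂ))‖)
    (hnonanalytic : (⨅ n : ℕ, LinearMap.range (S ^ n).toLinearMap) ≠ ⊥) :
    (∀ n : ℕ, ∀ x ∈ ⨅ k : ℕ, LinearMap.range (S ^ k).toLinearMap,
        ∀ y ∈ Submodule.map (S ^ n).toLinearMap (LinearMap.ker (adjoint S).toLinearMap), (inner ℂ x y : ℂ) = 0) ∧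
      (∀ m n : ℕ, m ≠ n →
        ∀ x ∈ Submodule.map (S ^ m).toLinearMap (LinearMap.ker (adjoint S).toLinearMap),
          ∀ y ∈ Submodule.map (S ^ n).toLinearMap (LinearMap.ker (adjoint S).toLinearMap),
            (inner ℂ x y : ℂ) = 0) ∧
      ((⨅ k : ℕ, LinearMap.range (S ^ k).toLinearMap) ⊔
          (⨆ n : ℕ, Submodule.map (S ^ n).toLinearMap (LinearMap.ker (adjoint S).toLinearMap))).topologicalClosure
        = ⊤ :=
  stmt19_general T wt S hS hleft hbal
end
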